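/- arXiv:1808.02803 — 10 statements merged into one kernel-verified Lean document; each statement's English description precedes it below -/
import Mathlib

section
/- If f : [a,b] → ℝ is absolutely continuous with a < b, and m is a real number such that f'(t) ≥ m for almost every t ∈ [a,b], then |∫_a^b f(t) dt − (b−a)/90 · (7f(a) + 32f((3a+b)/4) + 12f((a+b)/2) + 32f((a+3b)/4) + 7f(b))| ≤ (11/60) · ((f(b)−f(a))/(b−a) − m) · (b−a)². -/
/-!
Put `g t = f t - m t`. The hypothesis `f' ≥ m` makes `g` nondecreasing on `[a, b]`, and since
Boole's rule integrates linear functions exactly, its error for `f` equals its error for `g`.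
On each quarter of `[a, b]` the integral of `g` lies between the quarter's length times the values
of `g` at its two endpoints; feeding these bounds into the error leaves a linear inequality in the
five node values of `g`, which holds because they are increasing.
-/

open MeasureTheory Set

noncomputable def booleRule (f : ℝ → ℝ) (a b : ℝ) : ℝ :=
  (b - a)/90 * (7*f a + 32*f ((3*a+b)/4) + 12*f ((a+b)/2) + 32*f ((a+3*b)/4) + 7*f b)

theorem booleRule_add_mul_id (g : ℝ → ℝ) (m a b : ℝ) :
    booleRule (fun t => g t + m * t) a b = booleRule g a b + ∫ t in a..b, m * t := by
  rw [intervalIntegral.integral_const_mul, integral_id]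
  unfold booleRule
  ring

theorem integral_sub_booleRule_add_mul_id {g : ℝ → ℝ} {a b : ℝ}
    (hg : IntervalIntegrable g volume a b) (m : ℝ) :
    (∫ t in a..b, g t + m * t) - booleRule (fun t => g t + m * t) a b
      = (∫ t in a..b, g t) - booleRule g a b := by
  rw [intervalIntegral.integral_add hg
    (intervalIntegral.intervalIntegrable_id.const_mul m),
    booleRule_add_mul_id]
  ring

theorem MonotoneOn.integral_mem_Icc {g : ℝ → ℝ} {s : Set ℝ} {x y : ℝ} (hg : MonotoneOn g s)
    (hxy : x ≤ y) (hs : Icc x y ⊆ s) :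
    (∫ t in x..y, g t) ∈ Icc ((y - x) * g x) ((y - x) * g y) := by
  have hxy' : x ∈ Icc x y ∧ y ∈ Icc x y := ⟨left_mem_Icc.2 hxy, right_mem_Icc.2 hxy⟩
  have hgi : IntervalIntegrable g volume x y :=
    (hg.mono (uIcc_of_le hxy ▸ hs)).intervalIntegrable
  constructor
  · simpa using intervalIntegral.integral_mono_on hxy intervalIntegrable_const hgi
      fun t ht => hg (hs hxy'.1) (hs ht) ht.1
  · simpa using intervalIntegral.integral_mono_on hxy hgi intervalIntegrable_const
      fun t ht => hg (hs ht) (hs hxy'.2) ht.2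

/-- Equality holds for `g₀ = g₁ = 0`, `g₂ = g₃ = g₄ = 1`, `I₁ = 0`, `I₂ = I₃ = I₄ = h`: a unit step
just after the first node. This is where the constant `11/60` comes from. -/
theorem abs_sum_sub_boole_le_of_mem_Icc {h g₀ g₁ g₂ g₃ g₄ I₁ I₂ I₃ I₄ : ℝ} (hh : 0 ≤ h)
    (h₀₁ : g₀ ≤ g₁) (h₁₂ : g₁ ≤ g₂) (h₂₃ : g₂ ≤ g₃) (h₃₄ : g₃ ≤ g₄)
    (hI₁ : I₁ ∈ Icc (h * g₀) (h * g₁)) (hI₂ : I₂ ∈ Icc (h * g₁) (h * g₂))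
    (hI₃ : I₃ ∈ Icc (h * g₂) (h * g₃)) (hI₄ : I₄ ∈ Icc (h * g₃) (h * g₄)) :
    |I₁ + I₂ + I₃ + I₄ - 4 * h / 90 * (7 * g₀ + 32 * g₁ + 12 * g₂ + 32 * g₃ + 7 * g₄)|
      ≤ 11 / 60 * (g₄ - g₀) * (4 * h) := by
  have d₀₁ := mul_le_mul_of_nonneg_left h₀₁ hh
  have d₁₂ := mul_le_mul_of_nonneg_left h₁₂ hh
  have d₂₃ := mul_le_mul_of_nonneg_left h₂₃ hh
  have d₃₄ := mul_le_mul_of_nonneg_left h₃₄ hh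
  rw [abs_le]
  constructor
  · linarith [hI₁.1, hI₂.1, hI₃.1, hI₄.1]
  · linarith [hI₁.2, hI₂.2, hI₃.2, hI₄.2]

theorem abs_integral_sub_booleRule_le_of_monotoneOn {g : ℝ → ℝ} {a b : ℝ} (hab : a ≤ b)
    (hg : MonotoneOn g (Icc a b)) :
    |(∫ t in a..b, g t) - booleRule g a b| ≤ 11/60 * (g b - g a) * (b - a) := by
  obtain ⟨h, hh, rfl⟩ : ∃ h, 0 ≤ h ∧ b = a + 4 * h := ⟨(b - a) / 4, by linarith, by ring⟩
  rw [show a + 4 * h = a + h + h + h + h by ring] at hg ⊢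
  have piece : ∀ x, a ≤ x → x + h ≤ a + h + h + h + h →
      IntervalIntegrable g volume x (x + h) ∧
        (∫ t in x..x + h, g t) ∈ Icc (h * g x) (h * g (x + h)) := by
    intro x hax hxb
    have hsub : Icc x (x + h) ⊆ Icc a (a + h + h + h + h) := Icc_subset_Icc hax hxb
    refine ⟨(hg.mono (uIcc_of_le (le_add_of_nonneg_right hh) ▸ hsub)).intervalIntegrable, ?_⟩
    simpa using hg.integral_mem_Icc (le_add_of_nonneg_right hh) hsub
  obtain ⟨hi₁, hI₁⟩ := piece a le_rfl (by linarith)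
  obtain ⟨hi₂, hI₂⟩ := piece (a + h) (by linarith) (by linarith)
  obtain ⟨hi₃, hI₃⟩ := piece (a + h + h) (by linarith) (by linarith)
  obtain ⟨hi₄, hI₄⟩ := piece (a + h + h + h) (by linarith) le_rfl
  have hmono : ∀ x, a ≤ x → x + h ≤ a + h + h + h + h → g x ≤ g (x + h) := fun x hax hxb =>
    hg ⟨hax, by linarith⟩ ⟨by linarith, hxb⟩ (le_add_of_nonneg_right hh)
  rw [← intervalIntegral.integral_add_adjacent_intervals (hi₁.trans (hi₂.trans hi₃)) hi₄,
    ← intervalIntegral.integral_add_adjacent_intervals (hi₁.trans hi₂) hi₃,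
    ← intervalIntegral.integral_add_adjacent_intervals hi₁ hi₂]
  unfold booleRule
  rw [show (3 * a + (a + h + h + h + h)) / 4 = a + h by ring,
    show (a + (a + h + h + h + h)) / 2 = a + h + h by ring,
    show (a + 3 * (a + h + h + h + h)) / 4 = a + h + h + h by ring]
  convert abs_sum_sub_boole_le_of_mem_Icc hh (hmono a le_rfl (by linarith))
    (hmono (a + h) (by linarith) (by linarith)) (hmono (a + h + h) (by linarith) (by linarith))
    (hmono (a + h + h + h) (by linarith) le_rfl) hI₁ hI₂ hI₃ hI₄ using 2 <;> ring

theorem monotoneOn_sub_mul_of_le_ae {f f' : ℝ → ℝ} {a b m : ℝ}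
    (hint : IntegrableOn f' (Icc a b))
    (hac : ∀ x ∈ Icc a b, f x - f a = ∫ t in a..x, f' t)
    (hbound : ∀ᵐ t, t ∈ Icc a b → m ≤ f' t) :
    MonotoneOn (fun t => f t - m * t) (Icc a b) := by
  intro x hx y hy hxy
  have hf'i : ∀ z ∈ Icc a b, IntervalIntegrable f' volume a z := fun z hz =>
    (hint.mono_set (uIcc_of_le hz.1 ▸ Icc_subset_Icc le_rfl hz.2)).intervalIntegrable
  have hdiff : f y - f x = ∫ t in x..y, f' t := by
    rw [← intervalIntegral.integral_interval_sub_left (hf'i y hy) (hf'i x hx), ← hac y hy,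
      ← hac x hx]
    ring
  have hlow : (∫ _ in x..y, m) ≤ ∫ t in x..y, f' t := by
    refine intervalIntegral.integral_mono_ae_restrict hxy intervalIntegrable_const
      ((hf'i x hx).symm.trans (hf'i y hy)) ?_
    filter_upwards [ae_restrict_of_ae hbound, ae_restrict_mem measurableSet_Icc] with t hm ht
    exact hm ⟨hx.1.trans ht.1, ht.2.trans hy.2⟩
  rw [intervalIntegral.integral_const, smul_eq_mul, sub_mul] at hlow
  dsimp only
  linarith

theorem boole_bound_0 (a b m : ℝ) (hab : a < b) (f f' : ℝ → ℝ)
    (hint : MeasureTheory.IntegrableOn f' (Set.Icc a b))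
    (hac : ∀ x ∈ Set.Icc a b, f x - f a = ∫ t in a..x, f' t)
    (hbound : ∀ᵐ t, t ∈ Set.Icc a b → m ≤ f' t) :
    |(∫ t in a..b, f t) - (b - a)/90 * (7*f a + 32*f ((3*a+b)/4) + 12*f ((a+b)/2) + 32*f ((a+3*b)/4) + 7*f b)| ≤ (11/60 * ((f b - f a)/(b - a) - m)) * (b - a)^2 := by
  set g : ℝ → ℝ := fun t => f t - m * t
  have hg : MonotoneOn g (Icc a b) := monotoneOn_sub_mul_of_le_ae hint hac hbound
  have hf : f = fun t => g t + m * t := by ext t; simp [g]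
  have herr : (∫ t in a..b, f t) - booleRule f a b = (∫ t in a..b, g t) - booleRule g a b := by
    rw [hf]
    exact integral_sub_booleRule_add_mul_id (uIcc_of_le hab.le ▸ hg).intervalIntegrable m
  calc _ = |(∫ t in a..b, g t) - booleRule g a b| := by rw [← herr]; rfl
    _ ≤ 11/60 * (g b - g a) * (b - a) := abs_integral_sub_booleRule_le_of_monotoneOn hab.le hg
    _ = _ := by
      simp only [g]
      field_simp [(sub_pos.2 hab).ne']
      ring
end

section
/- If f : [a,b] → ℝ is absolutely continuous with a < b, and M is a real number such that f'(t) ≤ M for almost every t ∈ [a,b], then |∫_a^b f(t) dt − (b−a)/90 · (7f(a) + 32f((3a+b)/4) + 12f((a+b)/2) + 32f((a+3b)/4) + 7f(b))| ≤ (11/60) · (M − (f(b)−f(a))/(b−a)) · (b−a)². -/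
/-!
Writing `f x = f a + ∫_a^b 1[s ≤ x] f' s ds` and swapping the order of integration, the error
`∫_a^b f - ∑ wᵢ f(xᵢ)` of any rule with `∑ wᵢ = b - a` becomes `∫_a^b K f'`, where
`K s = (b - s) - ∑_{xᵢ ≥ s} wᵢ` is the Peano kernel. Boole's rule is exact on linear functions, so
`∫ K = 0` and the error equals `∫ K (f' - M)`. As `M - f' ≥ 0`, it is at most
`sup |K| · ∫ (M - f') = sup |K| · (M (b - a) - (f b - f a))`, and `sup |K| = 11 (b - a) / 60`,
attained at the node `(a + 3b) / 4`.
-/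

open MeasureTheory Set

section PeanoKernel

variable {a b : ℝ}

lemma integrable_uncurry_indicator_Iic {g : ℝ → ℝ} (hg : IntegrableOn g (Icc a b)) :
    Integrable (Function.uncurry fun t s => (Iic t).indicator g s)
      ((volume.restrict (Icc a b)).prod (volume.restrict (Icc a b))) := by
  have hle : Function.uncurry (fun t s => (Iic t).indicator g s)
      = {p : ℝ × ℝ | p.2 ≤ p.1}.indicator fun p => g p.2 := by
    ext p
    simp [Function.uncurry, indicator_apply]
  rw [hle]
  exact (hg.comp_snd _).indicator (measurableSet_le measurable_snd measurable_fst)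

lemma setIntegral_Icc_indicator_Iic {g : ℝ → ℝ} {y : ℝ} (hy : y ∈ Icc a b) :
    ∫ s in Icc a b, (Iic y).indicator g s = ∫ s in a..y, g s := by
  have hcap : Icc a b ∩ Iic y = Icc a y := by
    ext t; simp only [mem_inter_iff, mem_Icc, mem_Iic]; grind
  rw [setIntegral_indicator measurableSet_Iic, hcap, integral_Icc_eq_integral_Ioc,
    intervalIntegral.integral_of_le hy.1]

lemma integral_integral_indicator_Iic {g : ℝ → ℝ} (hg : IntegrableOn g (Icc a b)) :
    ∫ t in Icc a b, ∫ s in Icc a b, (Iic t).indicator g s = ∫ s in Icc a b, (b - s) * g s := by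
  rw [integral_integral_swap (integrable_uncurry_indicator_Iic hg)]
  refine setIntegral_congr_fun measurableSet_Icc fun s hs => ?_
  have hind : (fun t => (Iic t).indicator g s) = (Ici s).indicator fun _ => g s := by
    ext t
    by_cases h : s ≤ t <;> simp [h]
  have hcap : Icc a b ∩ Ici s = Icc s b := by
    ext t; simp only [mem_inter_iff, mem_Icc, mem_Ici]; grind
  rw [hind, setIntegral_indicator measurableSet_Ici, hcap, setIntegral_const,
    Real.volume_real_Icc_of_le hs.2, smul_eq_mul]

theorem intervalIntegral_eq_mul_add_integral_sub_mul {f f' : ℝ → ℝ} (hab : a ≤ b)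
    (hf' : IntegrableOn f' (Icc a b)) (hf : ∀ y ∈ Icc a b, f y - f a = ∫ t in a..y, f' t) :
    ∫ t in a..b, f t = (b - a) * f a + ∫ s in Icc a b, (b - s) * f' s := by
  have hf_eq : ∀ t ∈ Icc a b, f t = f a + ∫ s in Icc a b, (Iic t).indicator f' s := fun t ht => by
    rw [setIntegral_Icc_indicator_Iic ht, ← hf t ht, add_sub_cancel]
  have hinner : Integrable (fun t => ∫ s in Icc a b, (Iic t).indicator f' s)
      (volume.restrict (Icc a b)) := (integrable_uncurry_indicator_Iic hf').integral_prod_left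
  rw [intervalIntegral.integral_of_le hab, ← integral_Icc_eq_integral_Ioc,
    setIntegral_congr_fun measurableSet_Icc hf_eq, integral_add (integrable_const _) hinner,
    integral_integral_indicator_Iic hf', setIntegral_const, Real.volume_real_Icc_of_le hab,
    smul_eq_mul]

variable {ι : Type*} [Fintype ι]

noncomputable def peanoKernel (b : ℝ) (w x : ι → ℝ) (s : ℝ) : ℝ :=
  b - s - ∑ i, (Iic (x i)).indicator (fun _ => w i) s

lemma measurable_peanoKernel (b : ℝ) (w x : ι → ℝ) : Measurable (peanoKernel b w x) := by
  unfold peanoKernel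
  fun_prop (disch := exact measurableSet_Iic)

theorem intervalIntegral_sub_sum_eq_integral_peanoKernel_mul {f f' : ℝ → ℝ} {w x : ι → ℝ}
    (hab : a ≤ b) (hw : ∑ i, w i = b - a) (hx : ∀ i, x i ∈ Icc a b)
    (hf' : IntegrableOn f' (Icc a b)) (hf : ∀ y ∈ Icc a b, f y - f a = ∫ t in a..y, f' t) :
    (∫ t in a..b, f t) - ∑ i, w i * f (x i) = ∫ s in Icc a b, peanoKernel b w x s * f' s := by
  have hnode : ∀ i ∈ Finset.univ, w i * f (x i) =
      w i * f a + ∫ s in Icc a b, (Iic (x i)).indicator (fun s => w i * f' s) s := fun i _ => by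
    rw [setIntegral_Icc_indicator_Iic (hx i), intervalIntegral.integral_const_mul,
      ← hf _ (hx i)]
    ring
  have hKf : (fun s => peanoKernel b w x s * f' s) =
      fun s => (b - s) * f' s - ∑ i, (Iic (x i)).indicator (fun s => w i * f' s) s := by
    ext s
    simp only [peanoKernel, sub_mul, Finset.sum_mul, indicator_mul_left]
  have hlin : IntegrableOn (fun s => (b - s) * f' s) (Icc a b) :=
    hf'.continuousOn_mul (by fun_prop) isCompact_Icc
  have hind : ∀ i ∈ Finset.univ,
      IntegrableOn ((Iic (x i)).indicator fun s => w i * f' s) (Icc a b) := fun i _ =>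
    (hf'.const_mul (w i)).indicator measurableSet_Iic
  rw [hKf, integral_sub hlin (integrable_finsetSum _ hind), integral_finsetSum _ hind,
    intervalIntegral_eq_mul_add_integral_sub_mul hab hf' hf, Finset.sum_congr rfl hnode,
    Finset.sum_add_distrib, ← Finset.sum_mul, hw]
  ring

theorem integral_peanoKernel {w x : ι → ℝ} (hab : a ≤ b) (hw : ∑ i, w i = b - a)
    (hx : ∀ i, x i ∈ Icc a b) :
    ∫ s in Icc a b, peanoKernel b w x s = (b - a) ^ 2 / 2 - ∑ i, w i * (x i - a) := by
  have h := intervalIntegral_sub_sum_eq_integral_peanoKernel_mul (f := fun t => t - a)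
    (f' := fun _ => 1) hab hw hx (integrable_const _) (fun y _ => by simp)
  simp only [mul_one] at h
  rw [← h, intervalIntegral.integral_comp_sub_right (fun t => t), integral_id]
  ring

end PeanoKernel

theorem abs_integral_mul_le_of_integral_eq_zero {α : Type*} [MeasurableSpace α] {μ : Measure α}
    [IsFiniteMeasure μ] {K g : α → ℝ} {C M : ℝ} (hK : AEStronglyMeasurable K μ)
    (hKC : ∀ᵐ x ∂μ, |K x| ≤ C) (hK0 : ∫ x, K x ∂μ = 0) (hg : Integrable g μ)
    (hgM : ∀ᵐ x ∂μ, g x ≤ M) :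
    |∫ x, K x * g x ∂μ| ≤ C * (M * μ.real univ - ∫ x, g x ∂μ) := by
  have hKC' : ∀ᵐ x ∂μ, ‖K x‖ ≤ C := by simpa only [Real.norm_eq_abs] using hKC
  have hKg : Integrable (fun x => K x * g x) μ := hg.bdd_mul hK hKC'
  have hKM : Integrable (fun x => K x * (g x - M)) μ :=
    (hg.sub (integrable_const M)).bdd_mul hK hKC'
  have hshift : ∫ x, K x * g x ∂μ = ∫ x, K x * (g x - M) ∂μ := by
    simp only [mul_sub]
    rw [integral_sub hKg ((Integrable.of_bound hK C hKC').mul_const M), integral_mul_const, hK0,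
      zero_mul, sub_zero]
  calc |∫ x, K x * g x ∂μ| = |∫ x, K x * (g x - M) ∂μ| := by rw [hshift]
    _ ≤ ∫ x, |K x * (g x - M)| ∂μ := abs_integral_le_integral_abs
    _ ≤ ∫ x, C * (M - g x) ∂μ := by
      refine integral_mono_ae hKM.abs (((integrable_const M).sub hg).const_mul C) ?_
      filter_upwards [hKC, hgM] with x hKx hgx
      rw [abs_mul, abs_sub_comm, abs_of_nonneg (sub_nonneg.2 hgx)]
      exact mul_le_mul_of_nonneg_right hKx (sub_nonneg.2 hgx)
    _ = C * (M * μ.real univ - ∫ x, g x ∂μ) := by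
      rw [integral_const_mul, integral_sub (integrable_const M) hg, integral_const, smul_eq_mul,
        mul_comm M]

noncomputable def booleNodes (a b : ℝ) : Fin 5 → ℝ :=
  ![a, (3 * a + b) / 4, (a + b) / 2, (a + 3 * b) / 4, b]

noncomputable def booleWeights (a b : ℝ) : Fin 5 → ℝ :=
  fun i => (b - a) / 90 * ![7, 32, 12, 32, 7] i

lemma booleNodes_mem_Icc {a b : ℝ} (hab : a ≤ b) (i : Fin 5) : booleNodes a b i ∈ Icc a b := by
  fin_cases i <;>
    simp only [booleNodes, mem_Icc, Fin.zero_eta, Fin.mk_one, Fin.reduceFinMk, Fin.isValue,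
      Matrix.cons_val_zero, Matrix.cons_val_one, Matrix.cons_val] <;>
    constructor <;> linarith

lemma sum_booleWeights (a b : ℝ) : ∑ i, booleWeights a b i = b - a := by
  simp only [booleWeights, Fin.sum_univ_five, Fin.isValue, Matrix.cons_val_zero,
    Matrix.cons_val_one, Matrix.cons_val]
  ring

lemma abs_peanoKernel_boole_le {a b s : ℝ} (hs : s ∈ Icc a b) :
    |peanoKernel b (booleWeights a b) (booleNodes a b) s| ≤ 11 / 60 * (b - a) := by
  obtain ⟨has, hsb⟩ := hs
  simp only [peanoKernel, Fin.sum_univ_five, indicator_apply, mem_Iic]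
  split_ifs <;> simp only [booleWeights, booleNodes, Fin.isValue, Matrix.cons_val_zero,
    Matrix.cons_val_one, Matrix.cons_val] at * <;> rw [abs_le] <;> constructor <;> linarith

theorem boole_bound_1 (a b M : ℝ) (hab : a < b) (f f' : ℝ → ℝ)
    (hint : MeasureTheory.IntegrableOn f' (Set.Icc a b))
    (hac : ∀ x ∈ Set.Icc a b, f x - f a = ∫ t in a..x, f' t)
    (hbound : ∀ᵐ t, t ∈ Set.Icc a b → f' t ≤ M) :
    |(∫ t in a..b, f t) - (b - a)/90 * (7*f a + 32*f ((3*a+b)/4) + 12*f ((a+b)/2) + 32*f ((a+3*b)/4) + 7*f b)| ≤ (11/60 * (M - (f b - f a)/(b - a))) * (b - a)^2 := by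
  have hx := booleNodes_mem_Icc hab.le
  have hw := sum_booleWeights a b
  have hrule : ∑ i, booleWeights a b i * f (booleNodes a b i) =
      (b - a)/90 * (7*f a + 32*f ((3*a+b)/4) + 12*f ((a+b)/2) + 32*f ((a+3*b)/4) + 7*f b) := by
    simp only [booleWeights, booleNodes, Fin.sum_univ_five, Fin.isValue, Matrix.cons_val_zero,
      Matrix.cons_val_one, Matrix.cons_val]
    ring
  have hK0 : ∫ s in Icc a b, peanoKernel b (booleWeights a b) (booleNodes a b) s = 0 := by
    rw [integral_peanoKernel hab.le hw hx]
    simp only [booleWeights, booleNodes, Fin.sum_univ_five, Fin.isValue, Matrix.cons_val_zero,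
      Matrix.cons_val_one, Matrix.cons_val]
    ring
  have hKC : ∀ᵐ s ∂volume.restrict (Icc a b),
      |peanoKernel b (booleWeights a b) (booleNodes a b) s| ≤ 11 / 60 * (b - a) :=
    (ae_restrict_iff' measurableSet_Icc).2 (.of_forall fun _ => abs_peanoKernel_boole_le)
  have hf'M : ∀ᵐ t ∂volume.restrict (Icc a b), f' t ≤ M :=
    (ae_restrict_iff' measurableSet_Icc).2 hbound
  have hf'_int : ∫ t in Icc a b, f' t = f b - f a := by
    rw [integral_Icc_eq_integral_Ioc, ← intervalIntegral.integral_of_le hab.le,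
      ← hac b (right_mem_Icc.2 hab.le)]
  rw [← hrule, intervalIntegral_sub_sum_eq_integral_peanoKernel_mul hab.le hw hx hint hac]
  calc _ ≤ 11 / 60 * (b - a) * (M * volume.real (Icc a b) - ∫ t in Icc a b, f' t) :=
        measureReal_restrict_apply_univ (Icc a b) (μ := volume) ▸
          abs_integral_mul_le_of_integral_eq_zero
            (measurable_peanoKernel _ _ _).aestronglyMeasurable hKC hK0 hint hf'M
    _ = _ := by
      rw [Real.volume_real_Icc_of_le hab.le, hf'_int]
      field_simp [(sub_pos.2 hab).ne']
end

section
/- If f : [a,b] → ℝ is twice differentiable with f'' absolutely continuous on [a,b], a < b, and m is a real number such that f'''(t) ≥ m for almost every t ∈ [a,b], then |∫_a^b f(t) dt − (b−a)/90 · (7f(a) + 32f((3a+b)/4) + 12f((a+b)/2) + 32f((a+3b)/4) + 7f(b))| ≤ (1/1620) · ((f''(b)−f''(a))/(b−a) − m) · (b−a)⁴. -/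
open MeasureTheory Set intervalIntegral


lemma boole4_fub (a b : ℝ) (hab : a ≤ b) (g p : ℝ → ℝ)
    (hg : IntegrableOn g (Set.Icc a b)) (hp : Continuous p) :
    (∫ t in a..b, p t * ∫ s in a..t, g s) = ∫ s in a..b, (∫ t in s..b, p t) * g s := by
  set μ := volume.restrict (Set.Ioc a b) with hμ
  have hgIoc : IntegrableOn g (Set.Ioc a b) := hg.mono_set Set.Ioc_subset_Icc_self
  have hpIoc : IntegrableOn p (Set.Ioc a b) := hp.integrableOn_Ioc
  set F : ℝ → ℝ → ℝ := fun t s => if s ≤ t then p t * g s else 0 with hF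
  have hD : MeasurableSet {z : ℝ × ℝ | z.2 ≤ z.1} := measurableSet_le measurable_snd measurable_fst
  have hFint : Integrable (Function.uncurry F) (μ.prod μ) := by
    have h1 : Integrable (fun z : ℝ × ℝ => p z.1 * g z.2) (μ.prod μ) := hpIoc.mul_prod hgIoc
    have h2 : Function.uncurry F = Set.indicator {z : ℝ × ℝ | z.2 ≤ z.1}
        (fun z => p z.1 * g z.2) := by
      funext z
      simp only [Function.uncurry, hF, Set.indicator, Set.mem_Iic, Set.mem_Ici, Set.mem_setOf_eq]
    rw [h2]
    exact h1.indicator hD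
  have key := MeasureTheory.integral_integral_swap hFint
  have L : (∫ t in a..b, p t * ∫ s in a..t, g s) = ∫ t, ∫ s, F t s ∂μ ∂μ := by
    rw [intervalIntegral.integral_of_le hab]
    refine MeasureTheory.setIntegral_congr_fun measurableSet_Ioc (fun t ht => ?_)
    have e1 : ∀ s, F t s = Set.indicator (Set.Iic t) (fun s => p t * g s) s := by
      intro s; simp only [hF, Set.indicator, Set.mem_Iic, Set.mem_Ici, Set.mem_setOf_eq]
    simp only [e1]
    rw [MeasureTheory.integral_indicator measurableSet_Iic, hμ,
      MeasureTheory.Measure.restrict_restrict measurableSet_Iic]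
    have e2 : Set.Iic t ∩ Set.Ioc a b = Set.Ioc a t := by
      ext x; simp only [Set.mem_inter_iff, Set.mem_Iic, Set.mem_Ioc]
      exact ⟨fun ⟨h1, h2, _⟩ => ⟨h2, h1⟩, fun ⟨h1, h2⟩ => ⟨h2, h1, h2.trans ht.2⟩⟩
    rw [e2, MeasureTheory.integral_const_mul, intervalIntegral.integral_of_le ht.1.le]
  have R : (∫ s in a..b, (∫ t in s..b, p t) * g s) = ∫ s, ∫ t, F t s ∂μ ∂μ := by
    rw [intervalIntegral.integral_of_le hab]
    refine MeasureTheory.setIntegral_congr_fun measurableSet_Ioc (fun s hs => ?_)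
    have e1 : ∀ t, F t s = Set.indicator (Set.Ici s) (fun t => p t * g s) t := by
      intro t; simp only [hF, Set.indicator, Set.mem_Iic, Set.mem_Ici, Set.mem_setOf_eq]
    simp only [e1]
    rw [MeasureTheory.integral_indicator measurableSet_Ici, hμ,
      MeasureTheory.Measure.restrict_restrict measurableSet_Ici]
    have e2 : Set.Ici s ∩ Set.Ioc a b = Set.Icc s b := by
      ext x; simp only [Set.mem_inter_iff, Set.mem_Ici, Set.mem_Icc, Set.mem_Ioc]
      exact ⟨fun ⟨h1, _, h3⟩ => ⟨h1, h3⟩, fun ⟨h1, h2⟩ => ⟨h1, hs.1.trans_le h1, h2⟩⟩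
    rw [e2, MeasureTheory.integral_Icc_eq_integral_Ioc, MeasureTheory.integral_mul_const,
      intervalIntegral.integral_of_le hs.2]
  rw [L, R, key]

lemma boole4_taylor (a b : ℝ) (hab : a ≤ b) (f f' f'' f''' : ℝ → ℝ)
    (hderiv : ∀ x ∈ Set.Icc a b, HasDerivAt f (f' x) x)
    (hderiv' : ∀ x ∈ Set.Icc a b, HasDerivAt f' (f'' x) x)
    (hint : MeasureTheory.IntegrableOn f''' (Set.Icc a b))
    (hac : ∀ x ∈ Set.Icc a b, f'' x - f'' a = ∫ t in a..x, f''' t) :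
    ∀ x ∈ Set.Icc a b, f x = f a + f' a * (x - a) + f'' a * (x - a)^2/2
      + ∫ s in a..x, (x - s)^2/2 * f''' s := by
  have huIcc : ∀ x ∈ Set.Icc a b, Set.uIcc a x ⊆ Set.Icc a b := by
    intro x hx
    rw [Set.uIcc_of_le hx.1]
    exact Set.Icc_subset_Icc le_rfl hx.2
  have hgsub : ∀ x ∈ Set.Icc a b, IntegrableOn f''' (Set.Icc a x) := by
    intro x hx
    exact hint.mono_set (Set.Icc_subset_Icc le_rfl hx.2)
  have hgii : ∀ x ∈ Set.Icc a b, IntervalIntegrable f''' volume a x := by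
    intro x hx
    have : IntegrableOn f''' (Set.uIcc a x) := by
      rw [Set.uIcc_of_le hx.1]; exact hgsub x hx
    exact this.intervalIntegrable
  have mulint : ∀ (q : ℝ → ℝ), Continuous q → ∀ y ∈ Set.Icc a b,
      IntegrableOn (fun s => q s * f''' s) (Set.Icc a y) := by
    intro q hq y hy
    exact (intervalIntegrable_iff_integrableOn_Icc_of_le hy.1).1
      ((hgii y hy).continuousOn_mul hq.continuousOn)
  have mulii : ∀ (q : ℝ → ℝ), Continuous q → ∀ y ∈ Set.Icc a b,
      IntervalIntegrable (fun s => q s * f''' s) volume a y := by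
    intro q hq y hy
    exact (hgii y hy).continuousOn_mul hq.continuousOn
  have hprim : ContinuousOn (fun x => ∫ t in a..x, f''' t) (Set.Icc a b) := by
    have := intervalIntegral.continuousOn_primitive_interval
      (f := f''') (a := a) (b := b) (μ := volume) (by rwa [Set.uIcc_of_le hab])
    rwa [Set.uIcc_of_le hab] at this
  have hprimS : ContinuousOn (fun x => ∫ t in a..x, t * f''' t) (Set.Icc a b) := by
    have h0 : IntegrableOn (fun t => t * f''' t) (Set.uIcc a b) := by
      rw [Set.uIcc_of_le hab]; exact mulint (fun s => s) continuous_id' b ⟨hab, le_rfl⟩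
    have := intervalIntegral.continuousOn_primitive_interval (μ := volume) h0
    rwa [Set.uIcc_of_le hab] at this
  have hc'' : ContinuousOn f'' (Set.Icc a b) := by
    refine ContinuousOn.congr ((continuousOn_const (c := f'' a)).add hprim) ?_
    intro x hx
    have := hac x hx
    show f'' x = f'' a + ∫ t in a..x, f''' t
    linarith
  have hc' : ContinuousOn f' (Set.Icc a b) := fun x hx =>
    ((hderiv' x hx).continuousAt).continuousWithinAt
  -- Step 1 : formula for f'
  have step1 : ∀ x ∈ Set.Icc a b,
      f' x = f' a + f'' a * (x - a) + ∫ s in a..x, (x - s) * f''' s := by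
    intro x hx
    have h1 : ∫ t in a..x, f'' t = f' x - f' a :=
      integral_eq_sub_of_hasDerivAt (fun t ht => hderiv' t (huIcc x hx ht))
        ((hc''.mono (huIcc x hx)).intervalIntegrable)
    have h2 : (∫ t in a..x, f'' t)
        = ∫ t in a..x, (f'' a + ∫ s in a..t, f''' s) := by
      refine integral_congr (fun t ht => ?_)
      have := hac t (huIcc x hx ht)
      show f'' t = f'' a + ∫ s in a..t, f''' s
      linarith
    have hprimint : IntervalIntegrable (fun t => ∫ s in a..t, f''' s) volume a x :=
      (hprim.mono (huIcc x hx)).intervalIntegrable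
    have h3 : (∫ t in a..x, (f'' a + ∫ s in a..t, f''' s))
        = (x - a) * f'' a + ∫ t in a..x, (∫ s in a..t, f''' s) := by
      rw [integral_add intervalIntegrable_const hprimint,
        intervalIntegral.integral_const, smul_eq_mul]
    have h4 : (∫ t in a..x, (∫ s in a..t, f''' s))
        = ∫ s in a..x, (x - s) * f''' s := by
      have hf := boole4_fub a x hx.1 f''' (fun _ => 1) (hgsub x hx) continuous_const
      simp only [one_mul] at hf
      rw [hf]
      refine integral_congr (fun s hs => ?_)
      show (∫ t in s..x, (1:ℝ)) * f''' s = (x - s) * f''' s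
      rw [integral_one]
    rw [h2, h3, h4] at h1
    linarith
  -- Step 2 : formula for f
  intro x hx
  have h1 : ∫ t in a..x, f' t = f x - f a :=
    integral_eq_sub_of_hasDerivAt (fun t ht => hderiv t (huIcc x hx ht))
      ((hc'.mono (huIcc x hx)).intervalIntegrable)
  have h2 : (∫ t in a..x, f' t) = ∫ t in a..x,
      (f' a + f'' a * (t - a) + (t * (∫ s in a..t, f''' s) - ∫ s in a..t, s * f''' s)) := by
    refine integral_congr (fun t ht => ?_)
    have ht' := huIcc x hx ht
    have e1 := step1 t ht'
    have e2 : (∫ s in a..t, (t - s) * f''' s)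
        = t * (∫ s in a..t, f''' s) - ∫ s in a..t, s * f''' s := by
      have : (∫ s in a..t, (t - s) * f''' s) = ∫ s in a..t, (t * f''' s - s * f''' s) := by
        refine integral_congr (fun s _ => ?_); show (t-s) * f''' s = t * f''' s - s * f''' s; ring
      rw [this, integral_sub ((hgii t ht').const_mul t) (mulii (fun s => s) continuous_id' t ht'),
        intervalIntegral.integral_const_mul]
    show f' t = _
    rw [e1, e2]
  -- integrability of the pieces on [a,x]
  have hx' : Set.Icc a x ⊆ Set.Icc a b := Set.Icc_subset_Icc le_rfl hx.2
  have hR : IntervalIntegrable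
      (fun t => t * (∫ s in a..t, f''' s) - ∫ s in a..t, s * f''' s) volume a x := by
    refine IntervalIntegrable.sub ?_ ?_
    · exact (((continuous_id.continuousOn).mul (hprim.mono hx')).mono
        (by rw [Set.uIcc_of_le hx.1])).intervalIntegrable
    · exact ((hprimS.mono hx').mono (by rw [Set.uIcc_of_le hx.1])).intervalIntegrable
  have h3 : (∫ t in a..x,
      (f' a + f'' a * (t - a) + (t * (∫ s in a..t, f''' s) - ∫ s in a..t, s * f''' s)))
      = f' a * (x - a) + f'' a * (x - a)^2/2
        + ∫ t in a..x, (t * (∫ s in a..t, f''' s) - ∫ s in a..t, s * f''' s) := by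
    have hlin : IntervalIntegrable (fun t => f' a + f'' a * (t - a)) volume a x :=
      (Continuous.intervalIntegrable (by fun_prop) a x)
    rw [integral_add hlin hR, integral_add intervalIntegrable_const
      (Continuous.intervalIntegrable (by fun_prop) a x), intervalIntegral.integral_const,
      intervalIntegral.integral_const_mul]
    have : (∫ t in a..x, (t - a)) = (x - a)^2/2 := by
      rw [integral_sub intervalIntegrable_id intervalIntegrable_const,
        integral_id, intervalIntegral.integral_const, smul_eq_mul]
      ring
    rw [this, smul_eq_mul]
    ring
  have h4 : (∫ t in a..x, t * (∫ s in a..t, f''' s))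
      = ∫ s in a..x, ((x^2 - s^2)/2) * f''' s := by
    have hf := boole4_fub a x hx.1 f''' (fun t => t) (hgsub x hx) continuous_id
    rw [hf]
    refine integral_congr (fun s hs => ?_)
    show (∫ t in s..x, t) * f''' s = _
    rw [integral_id]
  have h5 : (∫ t in a..x, (∫ s in a..t, s * f''' s))
      = ∫ s in a..x, ((x - s) * s) * f''' s := by
    have hf := boole4_fub a x hx.1 (fun s => s * f''' s) (fun _ => 1)
      (mulint (fun s => s) continuous_id' x hx) continuous_const
    simp only [one_mul] at hf
    rw [hf]
    refine integral_congr (fun s hs => ?_)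
    show (∫ t in s..x, (1:ℝ)) * (s * f''' s) = _
    rw [integral_one]; ring
  have h6 : (∫ t in a..x, (t * (∫ s in a..t, f''' s) - ∫ s in a..t, s * f''' s))
      = ∫ s in a..x, (x - s)^2/2 * f''' s := by
    have e : (∫ t in a..x, (t * (∫ s in a..t, f''' s) - ∫ s in a..t, s * f''' s))
        = (∫ t in a..x, t * (∫ s in a..t, f''' s)) - ∫ t in a..x, (∫ s in a..t, s * f''' s) := by
      refine integral_sub ?_ ?_
      · exact (((continuous_id.continuousOn).mul (hprim.mono hx')).mono
          (by rw [Set.uIcc_of_le hx.1])).intervalIntegrable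
      · exact ((hprimS.mono hx').mono (by rw [Set.uIcc_of_le hx.1])).intervalIntegrable
    rw [e, h4, h5,
      ← integral_sub (mulii (fun s => (x^2 - s^2)/2) (by fun_prop) x hx)
        (mulii (fun s => (x - s) * s) (by fun_prop) x hx)]
    refine integral_congr (fun s hs => ?_)
    show (x^2 - s^2)/2 * f''' s - ((x - s) * s) * f''' s = (x - s)^2/2 * f''' s
    ring
  rw [h2, h3, h6] at h1
  linarith

lemma boole4_piece1 (p h : ℝ) (hp : 0 ≤ p) (hr : 4*p ≤ h) :
    |7*p^2*h/180 - p^3/6| ≤ h^3/1620 := by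
  have hr' : 0 ≤ h - 4*p := by linarith
  have hh : 0 ≤ h := by linarith
  rw [abs_le]
  constructor
  · nlinarith [mul_nonneg (mul_nonneg hp hp) hr', mul_nonneg (mul_nonneg hr' hh) hh,
      mul_nonneg (mul_nonneg hp hp) hp, mul_nonneg (mul_nonneg hp hr') hr']
  · nlinarith [mul_nonneg (mul_nonneg hp hp) hr', mul_nonneg (mul_nonneg hp hr') hr',
      mul_nonneg (mul_nonneg hr' hr') hr', mul_nonneg (mul_nonneg hp hp) hp,
      sq_nonneg (p - h/4), sq_nonneg (2*p - h/4), mul_nonneg (sq_nonneg (2*p - h/2)) hp]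

lemma boole4_piece2 (p h : ℝ) (h4 : h ≤ 4*p) (h2 : 2*p ≤ h) :
    |(1/90)*h^3 - (4/45)*p*h^2 + (13/60)*p^2*h - p^3/6| ≤ h^3/1620 := by
  have hq : 0 ≤ h - 2*p := by linarith
  have hq' : 0 ≤ 4*p - h := by linarith
  have hh : 0 ≤ h := by linarith
  rw [abs_le]
  constructor
  · -- exact identity: expr + h^3/1620 = (1/6)(p - h/3)^2 ((19/30)h - p)
    nlinarith [mul_nonneg (sq_nonneg (p - h/3)) hq, sq_nonneg (p - h/3),
      mul_nonneg (sq_nonneg (p - h/3)) hh]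
  · -- expr = (1/6)(h/2 - p) * Qd with Qd ≤ 0 on the region
    nlinarith [mul_nonneg (mul_nonneg hq hq') hq, mul_nonneg (mul_nonneg hq hq') hh,
      mul_nonneg (mul_nonneg hq hq') hq', mul_nonneg (mul_nonneg hq hh) hh,
      mul_nonneg (mul_nonneg hq' hh) hh]

noncomputable def booleK (a b s : ℝ) : ℝ :=
  (b - s)^3/6 - (b - a)/90 * (32 * (if s ≤ (3*a+b)/4 then ((3*a+b)/4 - s)^2/2 else 0)
    + 12 * (if s ≤ (a+b)/2 then ((a+b)/2 - s)^2/2 else 0)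
    + 32 * (if s ≤ (a+3*b)/4 then ((a+3*b)/4 - s)^2/2 else 0)
    + 7 * ((b - s)^2/2))

lemma booleK_continuous (a b : ℝ) : Continuous (booleK a b) := by
  unfold booleK
  have hif : ∀ c : ℝ, Continuous (fun s : ℝ => if s ≤ c then (c - s)^2/2 else 0) := by
    intro c
    apply Continuous.if_le (by fun_prop) continuous_const continuous_id continuous_const
    intro s hs
    simp only [id] at hs
    simp [hs]
  fun_prop

lemma booleK_bound (a b : ℝ) (hab : a < b) :
    ∀ s ∈ Set.Icc a b, |booleK a b s| ≤ (b - a)^3/1620 := by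
  intro s hs
  by_cases h1 : s ≤ (3*a+b)/4
  · have hK : booleK a b s = 7*(s-a)^2*(b-a)/180 - (s-a)^3/6 := by
      unfold booleK
      rw [if_pos h1, if_pos (show s ≤ (a+b)/2 by linarith),
        if_pos (show s ≤ (a+3*b)/4 by linarith)]
      ring
    rw [hK]
    exact boole4_piece1 (s-a) (b-a) (by linarith [hs.1]) (by linarith)
  by_cases h2 : s ≤ (a+b)/2
  · have hK : booleK a b s
        = (1/90)*(b-a)^3 - (4/45)*(s-a)*(b-a)^2 + (13/60)*(s-a)^2*(b-a) - (s-a)^3/6 := by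
      unfold booleK
      rw [if_neg h1, if_pos h2, if_pos (show s ≤ (a+3*b)/4 by linarith)]
      ring
    rw [hK]
    exact boole4_piece2 (s-a) (b-a) (by linarith) (by linarith)
  by_cases h3 : s ≤ (a+3*b)/4
  · have hK : booleK a b s
        = -((1/90)*(b-a)^3 - (4/45)*(b-s)*(b-a)^2 + (13/60)*(b-s)^2*(b-a) - (b-s)^3/6) := by
      unfold booleK
      rw [if_neg h1, if_neg h2, if_pos h3]
      ring
    rw [hK, abs_neg]
    exact boole4_piece2 (b-s) (b-a) (by linarith) (by linarith)
  · have hK : booleK a b s = -(7*(b-s)^2*(b-a)/180 - (b-s)^3/6) := by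
      unfold booleK
      rw [if_neg h1, if_neg h2, if_neg h3]
      ring
    rw [hK, abs_neg]
    exact boole4_piece1 (b-s) (b-a) (by linarith [hs.2]) (by linarith)

lemma boole4_sq_prim (a c : ℝ) : (∫ s in a..c, (c - s)^2/2) = (c - a)^3/6 := by
  have h := intervalIntegral.integral_comp_sub_left (a := a) (b := c)
    (fun u : ℝ => u^2/2) c
  rw [h]
  simp [intervalIntegral.integral_div, integral_pow]
  ring

lemma boole4_node (a b c : ℝ) (hc : c ∈ Set.Icc a b) (g : ℝ → ℝ) :
    (∫ s in a..c, (c - s)^2/2 * g s) = ∫ s in a..b, (if s ≤ c then (c - s)^2/2 else 0) * g s := by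
  have e : ∀ s, (if s ≤ c then (c - s)^2/2 else 0) * g s
      = Set.indicator {x : ℝ | x ≤ c} (fun s => (c - s)^2/2 * g s) s := by
    intro s
    by_cases h : s ≤ c <;> simp [Set.indicator, h]
  rw [intervalIntegral.integral_congr (fun s _ => e s), intervalIntegral.integral_indicator hc]

lemma boole4_if_cont (c : ℝ) : Continuous (fun s : ℝ => if s ≤ c then (c - s)^2/2 else 0) := by
  apply Continuous.if_le (by fun_prop) continuous_const continuous_id continuous_const
  intro s hs
  simp only [id] at hs
  simp [hs]

lemma booleK_integral_zero (a b : ℝ) (hab : a ≤ b) : (∫ s in a..b, booleK a b s) = 0 := by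
  have e1 : (∫ s in a..b, (b - s)^3/6) = (b-a)^4/24 := by
    rw [intervalIntegral.integral_comp_sub_left (fun u : ℝ => u^3/6) b]
    simp [intervalIntegral.integral_div, integral_pow]
    ring
  have e2 : (∫ s in a..b, (b - s)^2/2) = (b-a)^3/6 := boole4_sq_prim a b
  have eI : ∀ c ∈ Set.Icc a b, (∫ s in a..b, (if s ≤ c then (c - s)^2/2 else 0)) = (c-a)^3/6 := by
    intro c hc
    have h := boole4_node a b c hc (fun _ => 1)
    simp only [mul_one] at h
    rw [← h, boole4_sq_prim]
  have m1 : (3*a+b)/4 ∈ Set.Icc a b := by constructor <;> [linarith; linarith]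
  have m2 : (a+b)/2 ∈ Set.Icc a b := by constructor <;> [linarith; linarith]
  have m3 : (a+3*b)/4 ∈ Set.Icc a b := by constructor <;> [linarith; linarith]
  have i1 := Continuous.intervalIntegrable (μ := volume) (boole4_if_cont ((3*a+b)/4)) a b
  have i2 := Continuous.intervalIntegrable (μ := volume) (boole4_if_cont ((a+b)/2)) a b
  have i3 := Continuous.intervalIntegrable (μ := volume) (boole4_if_cont ((a+3*b)/4)) a b
  have ib2 : IntervalIntegrable (fun s => (b - s)^2/2) volume a b :=
    (Continuous.intervalIntegrable (μ := volume) (by fun_prop) a b)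
  have ib3 : IntervalIntegrable (fun s => (b - s)^3/6) volume a b :=
    (Continuous.intervalIntegrable (μ := volume) (by fun_prop) a b)
  unfold booleK
  rw [intervalIntegral.integral_sub ib3 (by
      apply IntervalIntegrable.const_mul
      exact (((i1.const_mul 32).add (i2.const_mul 12)).add (i3.const_mul 32)).add
        (ib2.const_mul 7)),
    intervalIntegral.integral_const_mul,
    intervalIntegral.integral_add (((i1.const_mul 32).add (i2.const_mul 12)).add
      (i3.const_mul 32)) (ib2.const_mul 7),
    intervalIntegral.integral_add ((i1.const_mul 32).add (i2.const_mul 12)) (i3.const_mul 32),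
    intervalIntegral.integral_add (i1.const_mul 32) (i2.const_mul 12),
    intervalIntegral.integral_const_mul, intervalIntegral.integral_const_mul,
    intervalIntegral.integral_const_mul, intervalIntegral.integral_const_mul,
    e1, e2, eI _ m1, eI _ m2, eI _ m3]
  ring


theorem boole_bound_4 (a b m : ℝ) (hab : a < b) (f f' f'' f''' : ℝ → ℝ)
    (hderiv : ∀ x ∈ Set.Icc a b, HasDerivAt f (f' x) x)
    (hderiv' : ∀ x ∈ Set.Icc a b, HasDerivAt f' (f'' x) x)
    (hint : MeasureTheory.IntegrableOn f''' (Set.Icc a b))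
    (hac : ∀ x ∈ Set.Icc a b, f'' x - f'' a = ∫ t in a..x, f''' t)
    (hbound : ∀ᵐ t, t ∈ Set.Icc a b → m ≤ f''' t) :
    |(∫ t in a..b, f t) - (b - a)/90 * (7*f a + 32*f ((3*a+b)/4) + 12*f ((a+b)/2) + 32*f ((a+3*b)/4) + 7*f b)| ≤ (1/1620 * ((f'' b - f'' a)/(b - a) - m)) * (b - a)^4 := by
  have hab' : a ≤ b := hab.le
  set g := f''' with hg
  have taylor := boole4_taylor a b hab' f f' f'' f''' hderiv hderiv' hint hac
  -- basic integrability facts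
  have hgii : IntervalIntegrable g volume a b := by
    have : IntegrableOn g (Set.uIcc a b) := by rwa [Set.uIcc_of_le hab']
    exact this.intervalIntegrable
  have mulii : ∀ (q : ℝ → ℝ), Continuous q →
      IntervalIntegrable (fun s => q s * g s) volume a b := fun q hq =>
    hgii.continuousOn_mul hq.continuousOn
  have mulint : ∀ (q : ℝ → ℝ), Continuous q →
      IntegrableOn (fun s => q s * g s) (Set.Icc a b) := fun q hq =>
    (intervalIntegrable_iff_integrableOn_Icc_of_le hab').1 (mulii q hq)
  -- membership of nodes
  have m1 : (3*a+b)/4 ∈ Set.Icc a b := by constructor <;> [linarith; linarith]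
  have m2 : (a+b)/2 ∈ Set.Icc a b := by constructor <;> [linarith; linarith]
  have m3 : (a+3*b)/4 ∈ Set.Icc a b := by constructor <;> [linarith; linarith]
  have mb : b ∈ Set.Icc a b := Set.right_mem_Icc.2 hab'
  -- P : quadratic part
  set P : ℝ → ℝ := fun y => f a + f' a * (y - a) + f'' a * (y - a)^2/2 with hP
  have hPc : Continuous P := by fun_prop
  -- primitives
  have hG0 : ContinuousOn (fun t => ∫ s in a..t, g s) (Set.Icc a b) := by
    have := intervalIntegral.continuousOn_primitive_interval
      (f := g) (a := a) (b := b) (μ := volume) (by rwa [Set.uIcc_of_le hab'])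
    rwa [Set.uIcc_of_le hab'] at this
  have hG1 : ContinuousOn (fun t => ∫ s in a..t, s * g s) (Set.Icc a b) := by
    have h0 : IntegrableOn (fun s => s * g s) (Set.uIcc a b) := by
      rw [Set.uIcc_of_le hab']; exact mulint (fun s => s) continuous_id'
    have := intervalIntegral.continuousOn_primitive_interval (μ := volume) h0
    rwa [Set.uIcc_of_le hab'] at this
  have hG2 : ContinuousOn (fun t => ∫ s in a..t, s^2 * g s) (Set.Icc a b) := by
    have h0 : IntegrableOn (fun s => s^2 * g s) (Set.uIcc a b) := by
      rw [Set.uIcc_of_le hab']; exact mulint (fun s => s^2) (by fun_prop)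
    have := intervalIntegral.continuousOn_primitive_interval (μ := volume) h0
    rwa [Set.uIcc_of_le hab'] at this
  have hgiit : ∀ t ∈ Set.Icc a b, IntervalIntegrable g volume a t := fun t ht =>
    hgii.mono_set (by rw [Set.uIcc_of_le ht.1, Set.uIcc_of_le hab']; exact Set.Icc_subset_Icc le_rfl ht.2)
  have muliit : ∀ (q : ℝ → ℝ), Continuous q → ∀ t ∈ Set.Icc a b,
      IntervalIntegrable (fun s => q s * g s) volume a t := fun q hq t ht =>
    (mulii q hq).mono_set (by rw [Set.uIcc_of_le ht.1, Set.uIcc_of_le hab']; exact Set.Icc_subset_Icc le_rfl ht.2)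
  -- rewrite remainder at t in terms of primitives
  have hrem : ∀ t ∈ Set.Icc a b, (∫ s in a..t, (t - s)^2/2 * g s)
      = (t^2/2) * (∫ s in a..t, g s) - t * (∫ s in a..t, s * g s)
        + (1/2) * (∫ s in a..t, s^2 * g s) := by
    intro t ht
    have e : (∫ s in a..t, (t - s)^2/2 * g s)
        = ∫ s in a..t, ((t^2/2) * g s - t * (s * g s) + (1/2) * (s^2 * g s)) := by
      refine intervalIntegral.integral_congr (fun s _ => ?_)
      show (t - s)^2/2 * g s = _
      ring
    rw [e, intervalIntegral.integral_add (IntervalIntegrable.sub ((hgiit t ht).const_mul _)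
        (((muliit (fun s => s) continuous_id' t ht)).const_mul _))
        ((muliit (fun s => s^2) (by fun_prop) t ht).const_mul _),
      intervalIntegral.integral_sub ((hgiit t ht).const_mul _)
        (((muliit (fun s => s) continuous_id' t ht)).const_mul _),
      intervalIntegral.integral_const_mul, intervalIntegral.integral_const_mul,
      intervalIntegral.integral_const_mul]
  -- integral of f
  have hfint : (∫ t in a..b, f t) = (∫ t in a..b, P t)
      + ∫ s in a..b, (b - s)^3/6 * g s := by
    have e0 : (∫ t in a..b, f t) = ∫ t in a..b,
        (P t + ((t^2/2) * (∫ s in a..t, g s) - t * (∫ s in a..t, s * g s)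
          + (1/2) * (∫ s in a..t, s^2 * g s))) := by
      refine intervalIntegral.integral_congr (fun t ht => ?_)
      rw [Set.uIcc_of_le hab'] at ht
      show f t = _
      rw [taylor t ht, hrem t ht]
    have iA : IntervalIntegrable (fun t => (t^2/2) * (∫ s in a..t, g s)) volume a b :=
      ((ContinuousOn.mul (by fun_prop) hG0).mono (by rw [Set.uIcc_of_le hab'])).intervalIntegrable
    have iB : IntervalIntegrable (fun t => t * (∫ s in a..t, s * g s)) volume a b :=
      ((ContinuousOn.mul (by fun_prop) hG1).mono (by rw [Set.uIcc_of_le hab'])).intervalIntegrable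
    have iC : IntervalIntegrable (fun t => (1/2) * (∫ s in a..t, s^2 * g s)) volume a b :=
      ((ContinuousOn.mul (by fun_prop) hG2).mono (by rw [Set.uIcc_of_le hab'])).intervalIntegrable
    have fA := boole4_fub a b hab' g (fun t => t^2/2) (by rwa [hg] at hint) (by fun_prop)
    have fB := boole4_fub a b hab' (fun s => s * g s) (fun t => t)
      (mulint (fun s => s) continuous_id') continuous_id'
    have fC := boole4_fub a b hab' (fun s => s^2 * g s) (fun _ => 1)
      (mulint (fun s => s^2) (by fun_prop)) continuous_const
    simp only [one_mul] at fC
    rw [e0, intervalIntegral.integral_add (hPc.intervalIntegrable a b) ((iA.sub iB).add iC),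
      intervalIntegral.integral_add (iA.sub iB) iC, intervalIntegral.integral_sub iA iB]
    have eA : (∫ t in a..b, t^2/2 * ∫ s in a..t, g s)
        = ∫ s in a..b, ((b^3 - s^3)/6) * g s := by
      rw [fA]
      refine intervalIntegral.integral_congr (fun s _ => ?_)
      show (∫ t in s..b, t^2/2) * g s = _
      rw [intervalIntegral.integral_div, integral_pow]
      ring
    have eB : (∫ t in a..b, t * ∫ s in a..t, s * g s)
        = ∫ s in a..b, ((b^2 - s^2)/2 * s) * g s := by
      rw [fB]
      refine intervalIntegral.integral_congr (fun s _ => ?_)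
      show (∫ t in s..b, t) * (s * g s) = _
      rw [integral_id]; ring
    have eC : (∫ t in a..b, (1/2) * ∫ s in a..t, s^2 * g s)
        = ∫ s in a..b, ((b - s)/2 * s^2) * g s := by
      rw [intervalIntegral.integral_const_mul, fC]
      rw [← intervalIntegral.integral_const_mul]
      refine intervalIntegral.integral_congr (fun s _ => ?_)
      show (1/2) * ((∫ t in s..b, (1:ℝ)) * (s^2 * g s)) = _
      rw [integral_one]; ring
    rw [eA, eB, eC]
    have comb : (∫ s in a..b, ((b^3 - s^3)/6) * g s) - (∫ s in a..b, ((b^2 - s^2)/2 * s) * g s)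
        + (∫ s in a..b, ((b - s)/2 * s^2) * g s) = ∫ s in a..b, (b - s)^3/6 * g s := by
      rw [← intervalIntegral.integral_sub (mulii (fun s => (b^3 - s^3)/6) (by fun_prop))
          (mulii (fun s => (b^2 - s^2)/2 * s) (by fun_prop)),
        ← intervalIntegral.integral_add ((mulii (fun s => (b^3 - s^3)/6) (by fun_prop)).sub
            (mulii (fun s => (b^2 - s^2)/2 * s) (by fun_prop)))
          (mulii (fun s => (b - s)/2 * s^2) (by fun_prop))]
      refine intervalIntegral.integral_congr (fun s _ => ?_)
      show (b^3 - s^3)/6 * g s - (b^2 - s^2)/2 * s * g s + (b - s)/2 * s^2 * g s = _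
      ring
    linarith [comb]
  -- node values
  have hnode : ∀ c ∈ Set.Icc a b, f c = P c
      + ∫ s in a..b, (if s ≤ c then (c - s)^2/2 else 0) * g s := by
    intro c hc
    rw [taylor c hc, boole4_node a b c hc g]
  -- E = ∫ K g
  set E := (∫ t in a..b, f t) - (b - a)/90 * (7*f a + 32*f ((3*a+b)/4) + 12*f ((a+b)/2)
    + 32*f ((a+3*b)/4) + 7*f b) with hE
  -- polynomial exactness
  have hpoly : (∫ t in a..b, P t) - (b - a)/90 * (7*P a + 32*P ((3*a+b)/4) + 12*P ((a+b)/2)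
      + 32*P ((a+3*b)/4) + 7*P b) = 0 := by
    have eP : (∫ t in a..b, P t)
        = f a * (b - a) + f' a * ((b - a)^2/2) + f'' a * ((b - a)^3/6) := by
      have h1 : (∫ t in a..b, (t - a)) = (b - a)^2/2 := by
        rw [intervalIntegral.integral_sub intervalIntegrable_id intervalIntegrable_const,
          integral_id, intervalIntegral.integral_const, smul_eq_mul]
        ring
      have h2 : (∫ t in a..b, (t - a)^2/2) = (b - a)^3/6 := by
        have e : (∫ t in a..b, (t - a)^2/2) = ∫ t in a..b, (t^2/2 - a*t + a^2/2) :=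
          intervalIntegral.integral_congr (fun t _ => by show (t-a)^2/2 = _; ring)
        rw [e, intervalIntegral.integral_add (by apply Continuous.intervalIntegrable (μ := volume); fun_prop)
            (by apply Continuous.intervalIntegrable (μ := volume); fun_prop),
          intervalIntegral.integral_sub (by apply Continuous.intervalIntegrable (μ := volume); fun_prop)
            (by apply Continuous.intervalIntegrable (μ := volume); fun_prop),
          intervalIntegral.integral_div, integral_pow, intervalIntegral.integral_const_mul,
          integral_id, intervalIntegral.integral_const, smul_eq_mul]
        norm_num
        ring
      have e : (∫ t in a..b, P t) = ∫ t in a..b, (f a + (f' a * (t - a) + f'' a * ((t-a)^2/2))) :=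
        intervalIntegral.integral_congr (fun t _ => by show P t = _; rw [hP]; ring)
      rw [e, intervalIntegral.integral_add intervalIntegrable_const
          (Continuous.intervalIntegrable (μ := volume) (by fun_prop) a b),
        intervalIntegral.integral_add (Continuous.intervalIntegrable (μ := volume) (by fun_prop) a b)
          (Continuous.intervalIntegrable (μ := volume) (by fun_prop) a b),
        intervalIntegral.integral_const_mul, intervalIntegral.integral_const_mul,
        h1, h2, intervalIntegral.integral_const, smul_eq_mul]
      ring
    rw [eP, hP]
    simp only
    ring
  have hEK : E = ∫ s in a..b, booleK a b s * g s := by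
    have i1 := mulii _ (boole4_if_cont ((3*a+b)/4))
    have i2 := mulii _ (boole4_if_cont ((a+b)/2))
    have i3 := mulii _ (boole4_if_cont ((a+3*b)/4))
    have ibq := mulii (fun s => (b - s)^2/2) (by fun_prop)
    have ibc := mulii (fun s => (b - s)^3/6) (by fun_prop)
    have hfb : f b = P b + ∫ s in a..b, (b - s)^2/2 * g s := by
      rw [taylor b mb]
    have hfa : f a = P a := by
      rw [taylor a (Set.left_mem_Icc.2 hab')]
      simp [hP]
    have expand : (∫ s in a..b, booleK a b s * g s)
        = (∫ s in a..b, (b - s)^3/6 * g s)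
          - (b - a)/90 * (32 * (∫ s in a..b, (if s ≤ (3*a+b)/4 then ((3*a+b)/4 - s)^2/2 else 0) * g s)
            + 12 * (∫ s in a..b, (if s ≤ (a+b)/2 then ((a+b)/2 - s)^2/2 else 0) * g s)
            + 32 * (∫ s in a..b, (if s ≤ (a+3*b)/4 then ((a+3*b)/4 - s)^2/2 else 0) * g s)
            + 7 * (∫ s in a..b, (b - s)^2/2 * g s)) := by
      have e : ∀ s, booleK a b s * g s
          = (b - s)^3/6 * g s - (b - a)/90 * (32 * ((if s ≤ (3*a+b)/4 then ((3*a+b)/4 - s)^2/2 else 0) * g s)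
            + 12 * ((if s ≤ (a+b)/2 then ((a+b)/2 - s)^2/2 else 0) * g s)
            + 32 * ((if s ≤ (a+3*b)/4 then ((a+3*b)/4 - s)^2/2 else 0) * g s)
            + 7 * ((b - s)^2/2 * g s)) := by
        intro s
        unfold booleK
        ring
      rw [intervalIntegral.integral_congr (fun s _ => e s), intervalIntegral.integral_sub ibc (by
          apply IntervalIntegrable.const_mul
          exact (((i1.const_mul 32).add (i2.const_mul 12)).add (i3.const_mul 32)).add
            (ibq.const_mul 7)),
        intervalIntegral.integral_const_mul,
        intervalIntegral.integral_add (((i1.const_mul 32).add (i2.const_mul 12)).add (i3.const_mul 32))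
          (ibq.const_mul 7),
        intervalIntegral.integral_add ((i1.const_mul 32).add (i2.const_mul 12)) (i3.const_mul 32),
        intervalIntegral.integral_add (i1.const_mul 32) (i2.const_mul 12),
        intervalIntegral.integral_const_mul, intervalIntegral.integral_const_mul,
        intervalIntegral.integral_const_mul, intervalIntegral.integral_const_mul]
    rw [hE, hfint, hnode _ m1, hnode _ m2, hnode _ m3, hfb, hfa, expand]
    linear_combination hpoly
  -- E = ∫ K (g - m)
  have hEKm : E = ∫ s in a..b, booleK a b s * (g s - m) := by
    have iK : IntervalIntegrable (fun s => booleK a b s * g s) volume a b :=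
      mulii _ (booleK_continuous a b)
    have iKc : IntervalIntegrable (fun s => booleK a b s * m) volume a b :=
      ((booleK_continuous a b).intervalIntegrable a b).mul_const m
    have e : (∫ s in a..b, booleK a b s * (g s - m))
        = (∫ s in a..b, booleK a b s * g s) - ∫ s in a..b, booleK a b s * m := by
      rw [← intervalIntegral.integral_sub iK iKc]
      exact intervalIntegral.integral_congr (fun s _ => by show booleK a b s * (g s - m) = _; ring)
    rw [e, intervalIntegral.integral_mul_const, booleK_integral_zero a b hab', hEK]
    ring
  -- bound
  set C := (b - a)^3/1620 with hC
  have habs : |E| ≤ ∫ s in a..b, C * (g s - m) := by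
    rw [hEKm]
    refine le_trans (intervalIntegral.abs_integral_le_integral_abs hab') ?_
    have iabs : IntervalIntegrable (fun s => |booleK a b s * (g s - m)|) volume a b := by
      refine IntervalIntegrable.abs ?_
      have h1 : IntervalIntegrable (fun s => booleK a b s * g s) volume a b :=
        mulii _ (booleK_continuous a b)
      have h2 : IntervalIntegrable (fun s => booleK a b s * m) volume a b :=
        ((booleK_continuous a b).intervalIntegrable a b).mul_const m
      have e : (fun s => booleK a b s * (g s - m))
          = fun s => booleK a b s * g s - booleK a b s * m := by funext s; ring
      rw [e]
      exact h1.sub h2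
    have irhs : IntervalIntegrable (fun s => C * (g s - m)) volume a b := by
      refine IntervalIntegrable.const_mul ?_ C
      exact hgii.sub (intervalIntegrable_const)
    refine intervalIntegral.integral_mono_ae_restrict hab' iabs irhs ?_
    have h1 : ∀ᵐ s ∂(volume.restrict (Set.Icc a b)), s ∈ Set.Icc a b → m ≤ g s :=
      ae_restrict_of_ae hbound
    have h2 : ∀ᵐ s ∂(volume.restrict (Set.Icc a b)), s ∈ Set.Icc a b :=
      ae_restrict_mem measurableSet_Icc
    filter_upwards [h1, h2] with s hs1 hs2
    have hm : m ≤ g s := hs1 hs2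
    have hKb := booleK_bound a b hab s hs2
    calc |booleK a b s * (g s - m)| = |booleK a b s| * |g s - m| := abs_mul _ _
      _ = |booleK a b s| * (g s - m) := by rw [abs_of_nonneg (show (0:ℝ) ≤ g s - m by linarith)]
      _ ≤ C * (g s - m) := by
          apply mul_le_mul_of_nonneg_right hKb (by linarith)
  have hfinal : (∫ s in a..b, C * (g s - m)) = C * ((f'' b - f'' a) - m * (b - a)) := by
    rw [intervalIntegral.integral_const_mul, intervalIntegral.integral_sub hgii intervalIntegrable_const,
      intervalIntegral.integral_const, smul_eq_mul, ← hac b mb]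
    ring
  rw [hfinal] at habs
  have hRHS : C * ((f'' b - f'' a) - m * (b - a))
      = (1/1620 * ((f'' b - f'' a)/(b - a) - m)) * (b - a)^4 := by
    have hne : b - a ≠ 0 := sub_ne_zero.mpr hab.ne'
    rw [hC]
    field_simp
  calc |E| ≤ C * ((f'' b - f'' a) - m * (b - a)) := habs
    _ = _ := hRHS
end

section
/- If f : [a,b] → ℝ is twice differentiable with f'' absolutely continuous on [a,b], a < b, and M is a real number such that f'''(t) ≤ M for almost every t ∈ [a,b], then |∫_a^b f(t) dt − (b−a)/90 · (7f(a) + 32f((3a+b)/4) + 12f((a+b)/2) + 32f((a+3b)/4) + 7f(b))| ≤ (1/1620) · (M − (f''(b)−f''(a))/(b−a)) · (b−a)⁴. -/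
/-!
Boole's rule integrates quadratics exactly, so Taylor's formula with integral remainder (obtained
by integrating by parts three times against the absolutely continuous `f''`) turns its error into
the Peano form `∫ K f'''`, where `K t` is the error of the rule on `x ↦ max (x - t) 0 ^ 2 / 2`.
The rule is even exact on cubics, so `∫ K = 0` and `f'''` may be replaced by `f''' - M ≤ 0`;
then `|K| ≤ (b - a) ^ 3 / 1620` bounds the error by `(b - a) ^ 3 / 1620 * ∫ (M - f''')`, and
`∫ f''' = f'' b - f'' a`.
-/

open MeasureTheory Set intervalIntegral
open scoped Interval

theorem absolutelyContinuousOnInterval_of_hasDerivAt {u u' : ℝ → ℝ} {a b : ℝ}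
    (hu : ∀ t ∈ [[a, b]], HasDerivAt u (u' t) t) (hu' : ContinuousOn u' [[a, b]]) :
    AbsolutelyContinuousOnInterval u a b := by
  obtain ⟨C, hC⟩ := isCompact_uIcc.exists_bound_of_continuousOn hu'
  refine LipschitzOnWith.absolutelyContinuousOnInterval (K := C.toNNReal) ?_
  refine (convex_uIcc a b).lipschitzOnWith_of_nnnorm_hasDerivWithin_le
    (fun t ht => (hu t ht).hasDerivWithinAt) fun t ht => ?_
  rw [← NNReal.coe_le_coe, coe_nnnorm]
  exact (hC t ht).trans (Real.le_coe_toNNReal C)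

theorem integral_mul_eq_sub_integral_of_eq_add_integral {u u' v g : ℝ → ℝ} {a b : ℝ}
    (hu : ∀ t ∈ [[a, b]], HasDerivAt u (u' t) t) (hu' : ContinuousOn u' [[a, b]])
    (hg : IntervalIntegrable g volume a b)
    (hv : ∀ t ∈ [[a, b]], v t = v a + ∫ s in a..t, g s) :
    ∫ t in a..b, u t * g t = u b * v b - u a * v a - ∫ t in a..b, u' t * v t := by
  set F : ℝ → ℝ := fun t => ∫ s in a..t, g s
  have hF : AbsolutelyContinuousOnInterval F a b :=
    hg.absolutelyContinuousOnInterval_intervalIntegral left_mem_uIcc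
  have hFg : ∫ t in a..b, u t * deriv F t = ∫ t in a..b, u t * g t := by
    refine integral_congr_ae ?_
    filter_upwards [hg.ae_hasDerivAt_integral] with t ht htab
    rw [(ht (uIoc_subset_uIcc htab) a left_mem_uIcc).deriv]
  have hu'F : ∫ t in a..b, deriv u t * F t = ∫ t in a..b, u' t * F t :=
    integral_congr fun t ht => by rw [(hu t ht).deriv]
  have hu'v : ∫ t in a..b, u' t * v t = (∫ t in a..b, u' t * F t) + v a * (u b - u a) := by
    rw [← integral_eq_sub_of_hasDerivAt hu hu'.intervalIntegrable,
      ← intervalIntegral.integral_const_mul,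
      ← integral_add
        (hu'.fun_mul (continuousOn_primitive_interval' hg left_mem_uIcc)).intervalIntegrable
        (hu'.intervalIntegrable.const_mul _)]
    refine integral_congr fun t ht => ?_
    simp only [hv t ht]
    ring
  have hparts :=
    (absolutelyContinuousOnInterval_of_hasDerivAt hu hu').integral_mul_deriv_eq_deriv_mul hF
  rw [hFg, hu'F] at hparts
  have hFa : F a = 0 := integral_same
  rw [hparts, hu'v, hv b right_mem_uIcc, hFa]
  ring

theorem integral_mul_eq_of_hasDerivAt_of_eq_add_integral
    {u u' u'' u''' f f' f'' g : ℝ → ℝ} {a b : ℝ}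
    (hu : ∀ t ∈ [[a, b]], HasDerivAt u (u' t) t)
    (hu' : ∀ t ∈ [[a, b]], HasDerivAt u' (u'' t) t)
    (hu'' : ∀ t ∈ [[a, b]], HasDerivAt u'' (u''' t) t) (hu''' : ContinuousOn u''' [[a, b]])
    (hf : ∀ t ∈ [[a, b]], HasDerivAt f (f' t) t)
    (hf' : ∀ t ∈ [[a, b]], HasDerivAt f' (f'' t) t) (hg : IntervalIntegrable g volume a b)
    (hf'' : ∀ t ∈ [[a, b]], f'' t = f'' a + ∫ s in a..t, g s) :
    ∫ t in a..b, u t * g t = (u b * f'' b - u' b * f' b + u'' b * f b)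
      - (u a * f'' a - u' a * f' a + u'' a * f a) - ∫ t in a..b, u''' t * f t := by
  have hu'c : ContinuousOn u' [[a, b]] := fun t ht => (hu' t ht).continuousAt.continuousWithinAt
  have hu''c : ContinuousOn u'' [[a, b]] := fun t ht => (hu'' t ht).continuousAt.continuousWithinAt
  have hf'c : ContinuousOn f' [[a, b]] := fun t ht => (hf' t ht).continuousAt.continuousWithinAt
  have hf''c : ContinuousOn f'' [[a, b]] :=
    (continuousOn_const.add (continuousOn_primitive_interval' hg left_mem_uIcc)).congr hf''
  rw [integral_mul_eq_sub_integral_of_eq_add_integral hu hu'c hg hf'',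
    integral_mul_deriv_eq_deriv_mul hu' hf' hu''c.intervalIntegrable hf''c.intervalIntegrable,
    integral_mul_deriv_eq_deriv_mul hu'' hf hu'''.intervalIntegrable hf'c.intervalIntegrable]
  ring

theorem hasDerivAt_sub_pow_succ (y t : ℝ) (n : ℕ) :
    HasDerivAt (fun s => (y - s) ^ (n + 1)) (-((n + 1) * (y - t) ^ n)) t := by
  simpa using ((hasDerivAt_id' t).const_sub y).fun_pow (n + 1)

section Taylor

variable {f f' f'' g : ℝ → ℝ} {a y : ℝ}

theorem eq_taylor_add_integral_remainder (hf : ∀ t ∈ [[a, y]], HasDerivAt f (f' t) t)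
    (hf' : ∀ t ∈ [[a, y]], HasDerivAt f' (f'' t) t) (hg : IntervalIntegrable g volume a y)
    (hf'' : ∀ t ∈ [[a, y]], f'' t = f'' a + ∫ s in a..t, g s) :
    f y = f a + f' a * (y - a) + f'' a * (y - a) ^ 2 / 2
      + ∫ t in a..y, (y - t) ^ 2 / 2 * g t := by
  have h := integral_mul_eq_of_hasDerivAt_of_eq_add_integral
    (u := fun t => (y - t) ^ 2 / 2) (u' := fun t => -(y - t)) (u'' := fun _ => 1)
    (u''' := fun _ => 0)
    (fun t _ => ((hasDerivAt_sub_pow_succ y t 1).div_const 2).congr_deriv (by ring))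
    (fun t _ => ((hasDerivAt_id' t).const_sub y).neg.congr_deriv (by ring))
    (fun t _ => hasDerivAt_const t 1) continuousOn_const hf hf' hg hf''
  simp only [sub_self, zero_mul, intervalIntegral.integral_zero] at h
  linarith

theorem integral_eq_taylor_add_integral_remainder (hf : ∀ t ∈ [[a, y]], HasDerivAt f (f' t) t)
    (hf' : ∀ t ∈ [[a, y]], HasDerivAt f' (f'' t) t) (hg : IntervalIntegrable g volume a y)
    (hf'' : ∀ t ∈ [[a, y]], f'' t = f'' a + ∫ s in a..t, g s) :
    ∫ t in a..y, f t = f a * (y - a) + f' a * (y - a) ^ 2 / 2 + f'' a * (y - a) ^ 3 / 6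
      + ∫ t in a..y, (y - t) ^ 3 / 6 * g t := by
  have h := integral_mul_eq_of_hasDerivAt_of_eq_add_integral
    (u := fun t => (y - t) ^ 3 / 6) (u' := fun t => -((y - t) ^ 2 / 2)) (u'' := fun t => y - t)
    (u''' := fun _ => -1)
    (fun t _ => ((hasDerivAt_sub_pow_succ y t 2).div_const 6).congr_deriv (by ring))
    (fun t _ => ((hasDerivAt_sub_pow_succ y t 1).div_const 2).neg.congr_deriv (by ring))
    (fun t _ => (hasDerivAt_id' t).const_sub y)
    continuousOn_const hf hf' hg hf''
  simp only [sub_self, neg_mul, one_mul, intervalIntegral.integral_neg] at h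
  linarith

end Taylor

theorem integral_max_sub_zero_sq_mul {g : ℝ → ℝ} {a b y : ℝ} (hay : a ≤ y) (hyb : y ≤ b)
    (hg : IntervalIntegrable g volume a b) :
    ∫ t in a..b, max (y - t) 0 ^ 2 / 2 * g t = ∫ t in a..y, (y - t) ^ 2 / 2 * g t := by
  have hI : IntervalIntegrable (fun t => max (y - t) 0 ^ 2 / 2 * g t) volume a b :=
    hg.continuousOn_mul (by fun_prop)
  have hleft :
      ∫ t in a..y, max (y - t) 0 ^ 2 / 2 * g t = ∫ t in a..y, (y - t) ^ 2 / 2 * g t := by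
    refine integral_congr fun t ht => ?_
    rw [uIcc_of_le hay] at ht
    rw [max_eq_left (sub_nonneg.2 ht.2)]
  have hright : ∫ t in y..b, max (y - t) 0 ^ 2 / 2 * g t = 0 := by
    refine (integral_congr fun t ht => ?_).trans (intervalIntegral.integral_zero (a := y) (b := b))
    rw [uIcc_of_le hyb] at ht
    simp [max_eq_right (sub_nonpos.2 ht.1)]
  rw [← integral_add_adjacent_intervals (b := y)
      (hI.mono_set (by rw [uIcc_of_le hay, uIcc_of_le (hay.trans hyb)]; gcongr))
      (hI.mono_set (by rw [uIcc_of_le hyb, uIcc_of_le (hay.trans hyb)]; gcongr)),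
    hleft, hright, add_zero]

/-- The error of Boole's rule on `x ↦ max (x - t) 0 ^ 2 / 2`, for `t ∈ [a, b]`: the node `a`
contributes nothing and at `b` the truncation is inactive. -/
noncomputable def boolePeanoKernel (a b t : ℝ) : ℝ :=
  (b - t) ^ 3 / 6 - (b - a) / 90 * (32 * (max ((3 * a + b) / 4 - t) 0 ^ 2 / 2)
    + 12 * (max ((a + b) / 2 - t) 0 ^ 2 / 2) + 32 * (max ((a + 3 * b) / 4 - t) 0 ^ 2 / 2)
    + 7 * ((b - t) ^ 2 / 2))

theorem integral_boolePeanoKernel_mul {g : ℝ → ℝ} {a b : ℝ} (hab : a ≤ b)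
    (hg : IntervalIntegrable g volume a b) :
    ∫ t in a..b, boolePeanoKernel a b t * g t = (∫ t in a..b, (b - t) ^ 3 / 6 * g t)
      - (b - a) / 90 * (32 * (∫ t in a..(3 * a + b) / 4, ((3 * a + b) / 4 - t) ^ 2 / 2 * g t)
        + 12 * (∫ t in a..(a + b) / 2, ((a + b) / 2 - t) ^ 2 / 2 * g t)
        + 32 * (∫ t in a..(a + 3 * b) / 4, ((a + 3 * b) / 4 - t) ^ 2 / 2 * g t)
        + 7 * ∫ t in a..b, (b - t) ^ 2 / 2 * g t) := by
  have hI :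
      ∀ φ : ℝ → ℝ, Continuous φ → IntervalIntegrable (fun t => φ t * g t) volume a b :=
    fun φ hφ => hg.continuousOn_mul hφ.continuousOn
  rw [← integral_max_sub_zero_sq_mul (by linarith) (by linarith) hg,
    ← integral_max_sub_zero_sq_mul (by linarith) (by linarith) hg,
    ← integral_max_sub_zero_sq_mul (by linarith) (by linarith) hg,
    integral_congr (g := fun t => (b - t) ^ 3 / 6 * g t - (b - a) / 90 *
      (32 * (max ((3 * a + b) / 4 - t) 0 ^ 2 / 2 * g t)
        + 12 * (max ((a + b) / 2 - t) 0 ^ 2 / 2 * g t)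
        + 32 * (max ((a + 3 * b) / 4 - t) 0 ^ 2 / 2 * g t) + 7 * ((b - t) ^ 2 / 2 * g t)))
      fun t _ => by simp only [boolePeanoKernel]; ring,
    intervalIntegral.integral_sub, intervalIntegral.integral_const_mul,
    intervalIntegral.integral_add, intervalIntegral.integral_add, intervalIntegral.integral_add,
    intervalIntegral.integral_const_mul, intervalIntegral.integral_const_mul,
    intervalIntegral.integral_const_mul, intervalIntegral.integral_const_mul]
  all_goals apply_rules [IntervalIntegrable.add, IntervalIntegrable.const_mul, hI]
  all_goals fun_prop

theorem boole_error_eq_integral_boolePeanoKernel_mul {f f' f'' g : ℝ → ℝ} {a b : ℝ}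
    (hab : a ≤ b) (hf : ∀ t ∈ Icc a b, HasDerivAt f (f' t) t)
    (hf' : ∀ t ∈ Icc a b, HasDerivAt f' (f'' t) t) (hg : IntervalIntegrable g volume a b)
    (hf'' : ∀ t ∈ Icc a b, f'' t = f'' a + ∫ s in a..t, g s) :
    (∫ t in a..b, f t) - (b - a) / 90 * (7 * f a + 32 * f ((3 * a + b) / 4) + 12 * f ((a + b) / 2)
      + 32 * f ((a + 3 * b) / 4) + 7 * f b) = ∫ t in a..b, boolePeanoKernel a b t * g t := by
  have hsub : ∀ y ∈ Icc a b, [[a, y]] ⊆ Icc a b := fun y hy => by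
    rw [uIcc_of_le hy.1]
    exact Icc_subset_Icc_right hy.2
  have htaylor : ∀ y ∈ Icc a b, f y = f a + f' a * (y - a) + f'' a * (y - a) ^ 2 / 2
      + ∫ t in a..y, (y - t) ^ 2 / 2 * g t := fun y hy =>
    eq_taylor_add_integral_remainder (fun t ht => hf t (hsub y hy ht))
      (fun t ht => hf' t (hsub y hy ht)) (hg.mono_set (by rw [uIcc_of_le hab]; exact hsub y hy))
      (fun t ht => hf'' t (hsub y hy ht))
  rw [integral_boolePeanoKernel_mul hab hg,
    integral_eq_taylor_add_integral_remainder (fun t ht => hf t (by rwa [uIcc_of_le hab] at ht))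
      (fun t ht => hf' t (by rwa [uIcc_of_le hab] at ht)) hg
      (fun t ht => hf'' t (by rwa [uIcc_of_le hab] at ht)),
    htaylor ((3 * a + b) / 4) ⟨by linarith, by linarith⟩,
    htaylor ((a + b) / 2) ⟨by linarith, by linarith⟩,
    htaylor ((a + 3 * b) / 4) ⟨by linarith, by linarith⟩, htaylor b ⟨hab, le_rfl⟩]
  ring

theorem integral_boolePeanoKernel {a b : ℝ} (hab : a ≤ b) :
    ∫ t in a..b, boolePeanoKernel a b t = 0 := by
  -- Boole's rule is exact on the cubic `(t - a) ^ 3 / 6`, whose third derivative is `1`.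
  have h := boole_error_eq_integral_boolePeanoKernel_mul (f := fun t => (t - a) ^ 3 / 6)
    (f' := fun t => (t - a) ^ 2 / 2) (f'' := fun t => t - a) (g := fun _ => 1) hab
    (fun t _ => (((hasDerivAt_id' t).sub_const a).fun_pow 3 |>.div_const 6).congr_deriv (by ring))
    (fun t _ => (((hasDerivAt_id' t).sub_const a).fun_pow 2 |>.div_const 2).congr_deriv (by ring))
    intervalIntegrable_const (fun t _ => by simp)
  simp only [mul_one] at h
  rw [← h, intervalIntegral.integral_comp_sub_right (fun x => x ^ 3 / 6)]
  simp only [sub_self, intervalIntegral.integral_div, integral_pow, Nat.reduceAdd, ne_eq,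
    OfNat.ofNat_ne_zero, not_false_eq_true, zero_pow, sub_zero, Nat.cast_ofNat, zero_div, mul_zero,
    zero_add]
  ring

theorem continuous_boolePeanoKernel (a b : ℝ) : Continuous (boolePeanoKernel a b) := by
  unfold boolePeanoKernel
  fun_prop

theorem abs_boolePeanoKernel_le {a b t : ℝ} (ht : t ∈ Icc a b) :
    |boolePeanoKernel a b t| ≤ (b - a) ^ 3 / 1620 := by
  obtain ⟨hat, htb⟩ := ht
  have hL : 0 ≤ b - a := by linarith
  rw [boolePeanoKernel, abs_le]
  rcases le_total t ((3 * a + b) / 4) with h1 | h1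
  · rw [max_eq_left (by linarith), max_eq_left (by linarith), max_eq_left (by linarith)]
    have hs : 0 ≤ t - a := by linarith
    constructor
    · nlinarith [sq_nonneg (t - a), sq_nonneg ((b - a) - 4 * (t - a)), mul_nonneg hs hs]
    · nlinarith [mul_nonneg hs (sq_nonneg (90 * (t - a) - 21 * (b - a))),
        mul_nonneg hL (sq_nonneg (60 * (t - a) - 7 * (b - a)))]
  rcases le_total t ((a + b) / 2) with h2 | h2
  · rw [max_eq_right (by linarith), max_eq_left (by linarith), max_eq_left (by linarith)]
    have hc : 0 ≤ 19 * (b - a) - 30 * (t - a) := by linarith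
    constructor
    · nlinarith [mul_nonneg (sq_nonneg (3 * (t - a) - (b - a))) hc]
    · nlinarith [mul_nonneg (sq_nonneg (3 * (t - a) - (b - a))) hc,
        mul_nonneg (by linarith : (0:ℝ) ≤ 4 * (t - a) - (b - a))
          (by linarith : (0:ℝ) ≤ 2 * (b - a) - 4 * (t - a))]
  rcases le_total t ((a + 3 * b) / 4) with h3 | h3
  · rw [max_eq_right (by linarith), max_eq_right (by linarith), max_eq_left (by linarith)]
    have hc : 0 ≤ 30 * (t - a) - 11 * (b - a) := by linarith
    constructor
    · nlinarith [mul_nonneg (sq_nonneg (3 * (t - a) - 2 * (b - a))) hc,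
        mul_nonneg (by linarith : (0:ℝ) ≤ 4 * (t - a) - 2 * (b - a))
          (by linarith : (0:ℝ) ≤ 3 * (b - a) - 4 * (t - a))]
    · nlinarith [mul_nonneg (sq_nonneg (3 * (t - a) - 2 * (b - a))) hc]
  · rw [max_eq_right (by linarith), max_eq_right (by linarith), max_eq_right (by linarith)]
    have hs : 0 ≤ (b - a) - (t - a) := by linarith
    constructor
    · nlinarith [mul_nonneg hs (sq_nonneg (69 * (b - a) - 90 * (t - a))),
        mul_nonneg hL (sq_nonneg (53 * (b - a) - 60 * (t - a)))]
    · nlinarith [sq_nonneg ((b - a) - (t - a)), mul_nonneg (mul_nonneg hs hs) hs,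
        sq_nonneg (4 * (t - a) - 3 * (b - a)),
        mul_nonneg (by linarith : (0:ℝ) ≤ 4 * (t - a) - 3 * (b - a)) hs]

theorem abs_integral_mul_le_of_abs_le {K φ : ℝ → ℝ} {a b C : ℝ} (hab : a ≤ b)
    (hK : ∀ t ∈ Icc a b, |K t| ≤ C) (hφ : ∀ᵐ t, t ∈ Icc a b → 0 ≤ φ t)
    (hφi : IntervalIntegrable φ volume a b) :
    |∫ t in a..b, K t * φ t| ≤ C * ∫ t in a..b, φ t := by
  rw [← intervalIntegral.integral_const_mul, ← Real.norm_eq_abs]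
  refine norm_integral_le_of_norm_le hab ?_ (hφi.const_mul C)
  filter_upwards [hφ] with t ht htab
  have htab' : t ∈ Icc a b := Ioc_subset_Icc_self htab
  rw [Real.norm_eq_abs, abs_mul, abs_of_nonneg (ht htab')]
  exact mul_le_mul_of_nonneg_right (hK t htab') (ht htab')

theorem boole_bound_5 (a b M : ℝ) (hab : a < b) (f f' f'' f''' : ℝ → ℝ)
    (hderiv : ∀ x ∈ Set.Icc a b, HasDerivAt f (f' x) x)
    (hderiv' : ∀ x ∈ Set.Icc a b, HasDerivAt f' (f'' x) x)
    (hint : MeasureTheory.IntegrableOn f''' (Set.Icc a b))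
    (hac : ∀ x ∈ Set.Icc a b, f'' x - f'' a = ∫ t in a..x, f''' t)
    (hbound : ∀ᵐ t, t ∈ Set.Icc a b → f''' t ≤ M) :
    |(∫ t in a..b, f t) - (b - a)/90 * (7*f a + 32*f ((3*a+b)/4) + 12*f ((a+b)/2) + 32*f ((a+3*b)/4) + 7*f b)| ≤ (1/1620 * (M - (f'' b - f'' a)/(b - a))) * (b - a)^4 := by
  have hg : IntervalIntegrable f''' volume a b :=
    (intervalIntegrable_iff_integrableOn_Icc_of_le hab.le).2 hint
  have hMg : IntervalIntegrable (fun t => M - f''' t) volume a b := intervalIntegrable_const.sub hg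
  have hshift : ∫ t in a..b, boolePeanoKernel a b t * (M - f''' t)
      = -∫ t in a..b, boolePeanoKernel a b t * f''' t := by
    have hK := (continuous_boolePeanoKernel a b).continuousOn (s := [[a, b]])
    simp only [mul_sub]
    rw [intervalIntegral.integral_sub (hK.intervalIntegrable.mul_const M) (hg.continuousOn_mul hK),
      intervalIntegral.integral_mul_const, integral_boolePeanoKernel hab.le, zero_mul, zero_sub]
  rw [boole_error_eq_integral_boolePeanoKernel_mul hab.le hderiv hderiv' hg
    (fun t ht => by linarith [hac t ht]), ← abs_neg, ← hshift]
  calc _ ≤ (b - a) ^ 3 / 1620 * ∫ t in a..b, (M - f''' t) :=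
        abs_integral_mul_le_of_abs_le hab.le (fun t ht => abs_boolePeanoKernel_le ht)
          (by filter_upwards [hbound] with t ht htab using sub_nonneg.2 (ht htab)) hMg
    _ = _ := by
        rw [intervalIntegral.integral_sub intervalIntegrable_const hg,
          intervalIntegral.integral_const, ← hac b ⟨hab.le, le_rfl⟩, smul_eq_mul]
        field_simp [(sub_pos.2 hab).ne']
end

section
/- Let a < b and define the piecewise linear kernel K : [a,b] → ℝ by K(t) = t − (83a+7b)/90 on [a, (3a+b)/4], K(t) = t − (17a+13b)/30 on ((3a+b)/4, (a+b)/2], K(t) = t − (13a+17b)/30 on ((a+b)/2, (a+3b)/4], and K(t) = t − (7a+83b)/90 on ((a+3b)/4, b]. Then sup_{t ∈ [a,b]} |K(t)| = (11/60)·(b−a). -/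
theorem boole_kernel1_sup (a b : ℝ) (hab : a < b) (K : ℝ → ℝ)
    (hK1 : ∀ t ∈ Set.Icc a ((3*a+b)/4), K t = t - (83*a+7*b)/90)
    (hK2 : ∀ t ∈ Set.Ioc ((3*a+b)/4) ((a+b)/2), K t = t - (17*a+13*b)/30)
    (hK3 : ∀ t ∈ Set.Ioc ((a+b)/2) ((a+3*b)/4), K t = t - (13*a+17*b)/30)
    (hK4 : ∀ t ∈ Set.Ioc ((a+3*b)/4) b, K t = t - (7*a+83*b)/90)
    : sSup ((fun t => |K t|) '' Set.Icc a b) = 11/60 * (b - a) := by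
  have hub : ∀ x ∈ (fun t => |K t|) '' Set.Icc a b, x ≤ 11/60 * (b - a) := by
    rintro x ⟨t, ⟨hta, htb⟩, rfl⟩
    rw [abs_le]
    rcases le_or_gt t ((3*a+b)/4) with h1 | h1
    · rw [hK1 t ⟨hta, h1⟩]; constructor <;> linarith
    · rcases le_or_gt t ((a+b)/2) with h2 | h2
      · rw [hK2 t ⟨h1, h2⟩]; constructor <;> linarith
      · rcases le_or_gt t ((a+3*b)/4) with h3 | h3
        · rw [hK3 t ⟨h2, h3⟩]; constructor <;> linarith
        · rw [hK4 t ⟨h3, htb⟩]; constructor <;> linarith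
  apply le_antisymm
  · exact Real.sSup_le hub (by linarith)
  · apply le_csSup ⟨_, hub⟩
    refine ⟨(a+3*b)/4, ⟨by linarith, by linarith⟩, ?_⟩
    show |K ((a+3*b)/4)| = _
    rw [hK3 _ ⟨by linarith, le_refl _⟩, abs_of_nonneg (by linarith)]
    ring
end

section
/- Let a < b and define the piecewise quadratic kernel K : [a,b] → ℝ by K(t) = t²/2 − ((83a+7b)/90)·t + (19a²/45 + 7ab/90) on [a, (3a+b)/4], K(t) = t²/2 − ((17a+13b)/30)·t + (7a²/45 + 23ab/90 + 4b²/45) on ((3a+b)/4, (a+b)/2], K(t) = t²/2 − ((13a+17b)/30)·t + (a+2b)(8a+7b)/90 on ((a+b)/2, (a+3b)/4], and K(t) = t²/2 − ((7a+83b)/90)·t + b(7a+38b)/90 on ((a+3b)/4, b]. Then sup_{t ∈ [a,b]} |K(t)| = (17/1440)·(b−a)². -/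
theorem boole_kernel2_sup (a b : ℝ) (hab : a < b) (K : ℝ → ℝ)
    (hK1 : ∀ t ∈ Set.Icc a ((3*a+b)/4), K t = t^2/2 - (83*a+7*b)/90*t + (19*a^2/45 + 7*a*b/90))
    (hK2 : ∀ t ∈ Set.Ioc ((3*a+b)/4) ((a+b)/2), K t = t^2/2 - (17*a+13*b)/30*t + (7*a^2/45 + 23*a*b/90 + 4*b^2/45))
    (hK3 : ∀ t ∈ Set.Ioc ((a+b)/2) ((a+3*b)/4), K t = t^2/2 - (13*a+17*b)/30*t + (a+2*b)*(8*a+7*b)/90)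
    (hK4 : ∀ t ∈ Set.Ioc ((a+3*b)/4) b, K t = t^2/2 - (7*a+83*b)/90*t + b*(7*a+38*b)/90)
    : sSup ((fun t => |K t|) '' Set.Icc a b) = 17/1440 * (b - a)^2 := by
  have hM : (0:ℝ) ≤ 17/1440 * (b - a)^2 := by positivity
  apply IsGreatest.csSup_eq
  constructor
  · refine ⟨(3*a+b)/4, ⟨by linarith, by linarith⟩, ?_⟩
    have h := hK1 ((3*a+b)/4) ⟨by linarith, le_refl _⟩
    show |K ((3*a+b)/4)| = _
    rw [h]
    rw [abs_of_nonneg (by nlinarith [sq_nonneg (b-a)])]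
    ring
  · rintro x ⟨t, ⟨ht1, ht2⟩, rfl⟩
    simp only
    rw [abs_le]
    rcases le_or_gt t ((3*a+b)/4) with h1 | h1
    · rw [hK1 t ⟨ht1, h1⟩]
      constructor
      · nlinarith [sq_nonneg (t - (83*a+7*b)/90), sq_nonneg (b-a)]
      · nlinarith [mul_nonneg (sub_nonneg.2 h1) (sub_nonneg.2 ht1), sq_nonneg (b-a),
          mul_nonneg (sub_nonneg.2 h1) (sub_nonneg.2 hab.le)]
    rcases le_or_gt t ((a+b)/2) with h2 | h2
    · rw [hK2 t ⟨h1, h2⟩]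
      constructor
      · nlinarith [sq_nonneg (t - (17*a+13*b)/30), sq_nonneg (b-a)]
      · nlinarith [mul_nonneg (sub_nonneg.2 h2) (sub_nonneg.2 h1.le), sq_nonneg (b-a),
          mul_nonneg (sub_nonneg.2 h2) (sub_nonneg.2 hab.le)]
    rcases le_or_gt t ((a+3*b)/4) with h3 | h3
    · rw [hK3 t ⟨h2, h3⟩]
      constructor
      · nlinarith [sq_nonneg (t - (13*a+17*b)/30), sq_nonneg (b-a)]
      · nlinarith [mul_nonneg (sub_nonneg.2 h3) (sub_nonneg.2 h2.le), sq_nonneg (b-a),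
          mul_nonneg (sub_nonneg.2 h3) (sub_nonneg.2 hab.le)]
    · rw [hK4 t ⟨h3, ht2⟩]
      constructor
      · nlinarith [sq_nonneg (t - (7*a+83*b)/90), sq_nonneg (b-a)]
      · nlinarith [mul_nonneg (sub_nonneg.2 ht2) (sub_nonneg.2 h3.le), sq_nonneg (b-a),
          mul_nonneg (sub_nonneg.2 ht2) (sub_nonneg.2 hab.le)]
end

section
/- Let a < b and define the piecewise cubic kernel K : [a,b] → ℝ by K(t) = t³/6 − ((83a+7b)/180)·t² + (19a²/45 + 7ab/90)·t − a²(23a+7b)/180 on [a, (3a+b)/4], K(t) = t³/6 − ((17a+13b)/60)·t² + (7a²/45 + 23ab/90 + 4b²/45)·t − (a³/36 + 13a²b/180 + ab²/18 + b³/90) on ((3a+b)/4, (a+b)/2], K(t) = t³/6 − ((13a+17b)/60)·t² + ((a+2b)(8a+7b)/90)·t − (a³/90 + a²b/18 + 13ab²/180 + b³/36) on ((a+b)/2, (a+3b)/4], and K(t) = t³/6 − ((7a+83b)/180)·t² + (b(7a+38b)/90)·t − b²(7a+23b)/180 on ((a+3b)/4, b]. Then sup_{t ∈ [a,b]} |K(t)|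 = (1/1620)·(b−a)³. -/
set_option maxHeartbeats 1000000


theorem boole_kernel3_sup (a b : ℝ) (hab : a < b) (K : ℝ → ℝ)
    (hK1 : ∀ t ∈ Set.Icc a ((3*a+b)/4), K t = t^3/6 - (83*a+7*b)/180*t^2 + (19*a^2/45 + 7*a*b/90)*t - a^2*(23*a+7*b)/180)
    (hK2 : ∀ t ∈ Set.Ioc ((3*a+b)/4) ((a+b)/2), K t = t^3/6 - (17*a+13*b)/60*t^2 + (7*a^2/45 + 23*a*b/90 + 4*b^2/45)*t - (a^3/36 + 13*a^2*b/180 + a*b^2/18 + b^3/90))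
    (hK3 : ∀ t ∈ Set.Ioc ((a+b)/2) ((a+3*b)/4), K t = t^3/6 - (13*a+17*b)/60*t^2 + (a+2*b)*(8*a+7*b)/90*t - (a^3/90 + a^2*b/18 + 13*a*b^2/180 + b^3/36))
    (hK4 : ∀ t ∈ Set.Ioc ((a+3*b)/4) b, K t = t^3/6 - (7*a+83*b)/180*t^2 + b*(7*a+38*b)/90*t - b^2*(7*a+23*b)/180)
    : sSup ((fun t => |K t|) '' Set.Icc a b) = 1/1620 * (b - a)^3 := by
  have hba : (0:ℝ) < b - a := by linarith
  have hM : (0:ℝ) ≤ 1/1620 * (b - a)^3 := by positivity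
  apply IsGreatest.csSup_eq
  constructor
  · refine ⟨(2*a+b)/3, ⟨by linarith, by linarith⟩, ?_⟩
    have ht0 : K ((2*a+b)/3) = 1/1620 * (b - a)^3 := by
      rw [hK2 ((2*a+b)/3) ⟨by linarith, by linarith⟩]; ring
    simp only [ht0, abs_of_nonneg hM]
  · rintro x ⟨t, ht, rfl⟩
    simp only
    rw [abs_le]
    rcases le_or_gt t ((3*a+b)/4) with h1 | h1
    · have hs : (0:ℝ) ≤ t - a := by linarith [ht.1]
      have he : (0:ℝ) ≤ (3*a+b)/4 - t := by linarith
      rw [hK1 t ⟨ht.1, h1⟩]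
      constructor
      · nlinarith [mul_nonneg hs (sq_nonneg (41*(t-a) - 15*((3*a+b)/4 - t))),
          mul_nonneg (mul_nonneg hs he) he, mul_nonneg (mul_nonneg he he) he]
      · nlinarith [mul_nonneg (mul_nonneg hs hs) hs, mul_nonneg (mul_nonneg hs hs) he,
          mul_nonneg (mul_nonneg hs he) he, mul_nonneg (mul_nonneg he he) he]
    · rcases le_or_gt t ((a+b)/2) with h2 | h2
      · have hs : (0:ℝ) ≤ t - (3*a+b)/4 := by linarith
        have he : (0:ℝ) ≤ (a+b)/2 - t := by linarith
        rw [hK2 t ⟨h1, h2⟩]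
        constructor
        · nlinarith [mul_nonneg (mul_nonneg hs hs) hs, mul_nonneg (mul_nonneg hs hs) he,
            mul_nonneg (mul_nonneg hs he) he, mul_nonneg (mul_nonneg he he) he]
        · nlinarith [mul_nonneg (sq_nonneg (3*t - 2*a - b)) hs,
            mul_nonneg (sq_nonneg (3*t - 2*a - b)) he]
      · rcases le_or_gt t ((a+3*b)/4) with h3 | h3
        · have hs : (0:ℝ) ≤ t - (a+b)/2 := by linarith
          have he : (0:ℝ) ≤ (a+3*b)/4 - t := by linarith
          rw [hK3 t ⟨h2, h3⟩]
          constructor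
          · nlinarith [mul_nonneg (sq_nonneg (a + 2*b - 3*t)) hs,
              mul_nonneg (sq_nonneg (a + 2*b - 3*t)) he]
          · nlinarith [mul_nonneg (mul_nonneg hs hs) hs, mul_nonneg (mul_nonneg hs hs) he,
              mul_nonneg (mul_nonneg hs he) he, mul_nonneg (mul_nonneg he he) he]
        · have hs : (0:ℝ) ≤ t - (a+3*b)/4 := by linarith
          have he : (0:ℝ) ≤ b - t := by linarith [ht.2]
          rw [hK4 t ⟨h3, ht.2⟩]
          constructor
          · nlinarith [mul_nonneg (mul_nonneg hs hs) hs, mul_nonneg (mul_nonneg hs hs) he,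
              mul_nonneg (mul_nonneg hs he) he, mul_nonneg (mul_nonneg he he) he]
          · nlinarith [mul_nonneg he (sq_nonneg (41*(b-t) - 15*(t-(a+3*b)/4))),
              mul_nonneg (mul_nonneg hs hs) he, mul_nonneg (mul_nonneg hs hs) hs]
end

section
/- Let a < b and let K be the third-order Peano kernel for Boole's rule (piecewise cubic with pieces K₁(t) = t³/6 − ((83a+7b)/180)t² + (19a²/45 + 7ab/90)t − a²(23a+7b)/180 on [a,(3a+b)/4], K₂(t) = t³/6 − ((17a+13b)/60)t² + (7a²/45 + 23ab/90 + 4b²/45)t − (a³/36 + 13a²b/180 + ab²/18 + b³/90) on ((3a+b)/4,(a+b)/2], K₃(t) = t³/6 − ((13a+17b)/60)t² + ((a+2b)(8a+7b)/90)t − (a³/90 + a²b/18 + 13ab²/180 + b³/36) on ((a+b)/2,(a+3b)/4], K₄(t) = t³/6 − ((7a+83b)/180)t² + (b(7a+38b)/90)t − b²(7a+23b)/180 on ((a+3b)/4,b]). If f : [a,b] → ℝ is twice differentiable with f'' absolutely continuous, then ∫_a^b K(t) f'''(t) dt = ((b−a)/90)·(7f(a) + 32f((3a+b)/4) + 12f((a+b)/2)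 + 32f((a+3b)/4) + 7f(b)) − ∫_a^b f(t) dt. -/
/-!
On each quarter of `[a, b]`, `K` is a cubic `P` with leading coefficient `1/6`, so three
integrations by parts turn `∫ P f'''` into the boundary term `P f'' - P' f' + P'' f` minus
`∫ f`; the first of them is integration by parts against the absolutely continuous `f''`.
The four cubics glue to a `C¹` function on `[a, b]` with `K = K' = 0` at `a` and `b`, so the
`f''` and `f'` terms telescope away, while the values of `K'' t = t - 2p` at `a` and `b` and
its jumps at the three nodes are the Boole weights times `(b - a) / 90`.
-/

open MeasureTheory intervalIntegral Set
open scoped Interval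

theorem sub_eq_integral_of_mem_Icc {v v' : ℝ → ℝ} {a b c x : ℝ}
    (hv' : IntegrableOn v' (Icc a b)) (hv : ∀ x ∈ Icc a b, v x - v a = ∫ t in a..x, v' t)
    (hc : c ∈ Icc a b) (hx : x ∈ Icc a b) :
    v x - v c = ∫ t in c..x, v' t := by
  have hint : ∀ y ∈ Icc a b, IntervalIntegrable v' volume a y := fun y hy =>
    (hv'.mono_set (uIcc_subset_Icc (left_mem_Icc.2 (hy.1.trans hy.2)) hy)).intervalIntegrable
  rw [← integral_interval_sub_left (hint x hx) (hint c hc), ← hv x hx, ← hv c hc]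
  ring

theorem continuousOn_of_sub_eq_integral {v v' : ℝ → ℝ} {c d : ℝ}
    (hv' : IntervalIntegrable v' volume c d)
    (hv : ∀ x ∈ [[c, d]], v x - v c = ∫ t in c..x, v' t) :
    ContinuousOn v [[c, d]] :=
  ((continuousOn_const (c := v c)).add (continuousOn_primitive_interval' hv' left_mem_uIcc)).congr
    fun x hx => eq_add_of_sub_eq' (hv x hx)

theorem integral_mul_deriv_eq_deriv_mul_of_sub_eq_integral {u u' v v' : ℝ → ℝ} {c d : ℝ}
    (hu : ∀ x, HasDerivAt u (u' x) x) (hu' : Continuous u')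
    (hv' : IntervalIntegrable v' volume c d)
    (hv : ∀ x ∈ [[c, d]], v x - v c = ∫ t in c..x, v' t) :
    ∫ x in c..d, u x * v' x = u d * v d - u c * v c - ∫ x in c..d, u' x * v x := by
  set G : ℝ → ℝ := fun x => ∫ t in c..x, v' t with hG
  have hderiv_u : deriv u = u' := funext fun x => (hu x).deriv
  have hu_ac : AbsolutelyContinuousOnInterval u c d :=
    (contDiff_one_iff_deriv.2 ⟨fun x => (hu x).differentiableAt, hderiv_u ▸ hu'⟩).contDiffOn
      |>.absolutelyContinuousOnInterval
  have hG_ac : AbsolutelyContinuousOnInterval G c d :=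
    hv'.absolutelyContinuousOnInterval_intervalIntegral left_mem_uIcc
  have hderiv_G : ∀ᵐ x, x ∈ Ι c d → u x * v' x = u x * deriv G x := by
    filter_upwards [hv'.ae_hasDerivAt_integral] with x hx hxI
    rw [(hx (uIoc_subset_uIcc hxI) c left_mem_uIcc).deriv]
  have hvG : ∫ x in c..d, u' x * v x = v c * (u d - u c) + ∫ x in c..d, u' x * G x := by
    rw [← integral_eq_sub_of_hasDerivAt (fun x _ => hu x) (hu'.intervalIntegrable c d),
      ← intervalIntegral.integral_const_mul,
      ← integral_add ((hu'.intervalIntegrable c d).const_mul _)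
        ((hu'.continuousOn.mul hG_ac.continuousOn).intervalIntegrable (u := fun x => u' x * G x))]
    refine integral_congr fun x hx => ?_
    simp only [hG, ← hv x hx]
    ring
  have hGc : G c = 0 := integral_same
  have hGd : G d = v d - v c := (hv d right_mem_uIcc).symm
  rw [integral_congr_ae hderiv_G, hu_ac.integral_mul_deriv_eq_deriv_mul hG_ac, hderiv_u, hvG,
    hGc, hGd]
  ring

noncomputable def cubicPartsBoundary (p q r : ℝ) (f f' f'' : ℝ → ℝ) (x : ℝ) : ℝ :=
  (x^3/6 - p*x^2 + q*x - r) * f'' x - (x^2/2 - 2*p*x + q) * f' x + (x - 2*p) * f x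

theorem integral_cubic_mul_third_deriv {f f' f'' f''' : ℝ → ℝ} {c d : ℝ} (p q r : ℝ)
    (hf : ∀ x ∈ [[c, d]], HasDerivAt f (f' x) x)
    (hf' : ∀ x ∈ [[c, d]], HasDerivAt f' (f'' x) x)
    (hf''' : IntervalIntegrable f''' volume c d)
    (hf'' : ∀ x ∈ [[c, d]], f'' x - f'' c = ∫ t in c..x, f''' t) :
    ∫ t in c..d, (t^3/6 - p*t^2 + q*t - r) * f''' t =
      cubicPartsBoundary p q r f f' f'' d - cubicPartsBoundary p q r f f' f'' c -
        ∫ t in c..d, f t := by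
  have hP : ∀ t, HasDerivAt (fun t => t^3/6 - p*t^2 + q*t - r) (t^2/2 - 2*p*t + q) t := fun t =>
    ((((hasDerivAt_pow 3 t).div_const 6).fun_sub ((hasDerivAt_pow 2 t).const_mul p)).fun_add
      ((hasDerivAt_id t).const_mul q) |>.sub_const r).congr_deriv (by push_cast; ring)
  have hP' : ∀ t, HasDerivAt (fun t => t^2/2 - 2*p*t + q) (t - 2*p) t := fun t =>
    ((((hasDerivAt_pow 2 t).div_const 2).fun_sub ((hasDerivAt_id t).const_mul (2*p))).add_const
      q).congr_deriv (by push_cast; ring)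
  have hP'' : ∀ t, HasDerivAt (fun t => t - 2*p) 1 t := fun t => (hasDerivAt_id t).sub_const _
  have hf'_cont : ContinuousOn f' [[c, d]] := fun x hx =>
    (hf' x hx).continuousAt.continuousWithinAt
  have parts₃ := integral_mul_deriv_eq_deriv_mul_of_sub_eq_integral hP (by fun_prop) hf''' hf''
  have parts₂ := integral_mul_deriv_eq_deriv_mul (fun x _ => hP' x) hf'
    ((by fun_prop : Continuous fun t : ℝ => t - 2*p).intervalIntegrable c d)
    (continuousOn_of_sub_eq_integral hf''' hf'').intervalIntegrable
  have parts₁ := integral_mul_deriv_eq_deriv_mul (fun x _ => hP'' x) hf intervalIntegrable_const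
    hf'_cont.intervalIntegrable
  simp only [one_mul] at parts₁
  rw [parts₃, parts₂, parts₁, cubicPartsBoundary, cubicPartsBoundary]
  ring

theorem integral_mul_third_deriv_of_eqOn_cubic {K f f' f'' f''' : ℝ → ℝ} {c d p q r : ℝ}
    (hcd : c ≤ d) (hK : ∀ t ∈ Ioc c d, K t = t^3/6 - p*t^2 + q*t - r)
    (hf : ∀ x ∈ [[c, d]], HasDerivAt f (f' x) x)
    (hf' : ∀ x ∈ [[c, d]], HasDerivAt f' (f'' x) x)
    (hf''' : IntervalIntegrable f''' volume c d)
    (hf'' : ∀ x ∈ [[c, d]], f'' x - f'' c = ∫ t in c..x, f''' t) :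
    IntervalIntegrable (fun t => K t * f''' t) volume c d ∧
      ∫ t in c..d, K t * f''' t = cubicPartsBoundary p q r f f' f'' d -
        cubicPartsBoundary p q r f f' f'' c - ∫ t in c..d, f t := by
  have hK_eq : EqOn (fun t => (t^3/6 - p*t^2 + q*t - r) * f''' t) (fun t => K t * f''' t)
      (Ι c d) := fun t ht => by
    rw [uIoc_of_le hcd] at ht
    simp only [hK t ht]
  refine ⟨(hf'''.continuousOn_mul (by fun_prop)).congr hK_eq, ?_⟩
  rw [← integral_congr_ae (ae_of_all _ hK_eq)]
  exact integral_cubic_mul_third_deriv p q r hf hf' hf''' hf''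

theorem boole_kernel3_identity (a b : ℝ) (hab : a < b) (K : ℝ → ℝ)
    (hK1 : ∀ t ∈ Set.Icc a ((3*a+b)/4), K t = t^3/6 - (83*a+7*b)/180*t^2 + (19*a^2/45 + 7*a*b/90)*t - a^2*(23*a+7*b)/180)
    (hK2 : ∀ t ∈ Set.Ioc ((3*a+b)/4) ((a+b)/2), K t = t^3/6 - (17*a+13*b)/60*t^2 + (7*a^2/45 + 23*a*b/90 + 4*b^2/45)*t - (a^3/36 + 13*a^2*b/180 + a*b^2/18 + b^3/90))
    (hK3 : ∀ t ∈ Set.Ioc ((a+b)/2) ((a+3*b)/4), K t = t^3/6 - (13*a+17*b)/60*t^2 + (a+2*b)*(8*a+7*b)/90*t - (a^3/90 + a^2*b/18 + 13*a*b^2/180 + b^3/36))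
    (hK4 : ∀ t ∈ Set.Ioc ((a+3*b)/4) b, K t = t^3/6 - (7*a+83*b)/180*t^2 + b*(7*a+38*b)/90*t - b^2*(7*a+23*b)/180)
    (f f' f'' f''' : ℝ → ℝ)
    (hderiv : ∀ x ∈ Set.Icc a b, HasDerivAt f (f' x) x)
    (hderiv' : ∀ x ∈ Set.Icc a b, HasDerivAt f' (f'' x) x)
    (hint : MeasureTheory.IntegrableOn f''' (Set.Icc a b))
    (hac : ∀ x ∈ Set.Icc a b, f'' x - f'' a = ∫ t in a..x, f''' t)
    : (∫ t in a..b, K t * f''' t) = (b - a)/90 * (7*f a + 32*f ((3*a+b)/4) + 12*f ((a+b)/2) + 32*f ((a+3*b)/4) + 7*f b) - ∫ t in a..b, f t := by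
  have hf_cont : ContinuousOn f (Icc a b) := fun x hx =>
    (hderiv x hx).continuousAt.continuousWithinAt
  have piece : ∀ {c d p q r : ℝ}, a ≤ c → c ≤ d → d ≤ b →
      (∀ t ∈ Ioc c d, K t = t^3/6 - p*t^2 + q*t - r) →
      IntervalIntegrable f volume c d ∧ IntervalIntegrable (fun t => K t * f''' t) volume c d ∧
      ∫ t in c..d, K t * f''' t = cubicPartsBoundary p q r f f' f'' d -
        cubicPartsBoundary p q r f f' f'' c - ∫ t in c..d, f t := by
    intro c d p q r hc hcd hd hK
    have hsub : [[c, d]] ⊆ Icc a b :=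
      uIcc_subset_Icc ⟨hc, hcd.trans hd⟩ ⟨hc.trans hcd, hd⟩
    exact ⟨(hf_cont.mono hsub).intervalIntegrable, integral_mul_third_deriv_of_eqOn_cubic hcd hK
      (fun x hx => hderiv x (hsub hx)) (fun x hx => hderiv' x (hsub hx))
      (hint.mono_set hsub).intervalIntegrable
      (fun x hx => sub_eq_integral_of_mem_Icc hint hac (hsub left_mem_uIcc) (hsub hx))⟩
  obtain ⟨hf₁, hK₁, h₁⟩ := piece le_rfl (by linarith) (by linarith)
    fun t ht => hK1 t (Ioc_subset_Icc_self ht)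
  obtain ⟨hf₂, hK₂, h₂⟩ := piece (by linarith) (by linarith) (by linarith) hK2
  obtain ⟨hf₃, hK₃, h₃⟩ := piece (by linarith) (by linarith) (by linarith) hK3
  obtain ⟨hf₄, hK₄, h₄⟩ := piece (by linarith) (by linarith) le_rfl hK4
  rw [← integral_add_adjacent_intervals ((hK₁.trans hK₂).trans hK₃) hK₄,
    ← integral_add_adjacent_intervals (hK₁.trans hK₂) hK₃,
    ← integral_add_adjacent_intervals hK₁ hK₂,
    ← integral_add_adjacent_intervals ((hf₁.trans hf₂).trans hf₃) hf₄,
    ← integral_add_adjacent_intervals (hf₁.trans hf₂) hf₃,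
    ← integral_add_adjacent_intervals hf₁ hf₂, h₁, h₂, h₃, h₄]
  simp only [cubicPartsBoundary]
  ring
end

section
/- Let a < b. The piecewise quadratic second-order Peano kernel K for Boole's rule attains the same maximum absolute value (17/1440)·(b−a)² on each of the four subintervals: sup over [a,(3a+b)/4] of |K₁|, sup over [(3a+b)/4,(a+b)/2] of |K₂|, sup over [(a+b)/2,(a+3b)/4] of |K₃|, and sup over [(a+3b)/4,b] of |K₄| all equal (17/1440)·(b−a)². -/
theorem boole_kernel2_piece_sups (a b : ℝ) (hab : a < b) :
    (sSup ((fun t => |t^2/2 - (83*a+7*b)/90*t + (19*a^2/45 + 7*a*b/90)|) '' Set.Icc a ((3*a+b)/4)) = 17/1440 * (b - a)^2) ∧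
    (sSup ((fun t => |t^2/2 - (17*a+13*b)/30*t + (7*a^2/45 + 23*a*b/90 + 4*b^2/45)|) '' Set.Icc ((3*a+b)/4) ((a+b)/2)) = 17/1440 * (b - a)^2) ∧
    (sSup ((fun t => |t^2/2 - (13*a+17*b)/30*t + (a+2*b)*(8*a+7*b)/90|) '' Set.Icc ((a+b)/2) ((a+3*b)/4)) = 17/1440 * (b - a)^2) ∧
    (sSup ((fun t => |t^2/2 - (7*a+83*b)/90*t + b*(7*a+38*b)/90|) '' Set.Icc ((a+3*b)/4) b) = 17/1440 * (b - a)^2) := by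
  have hM : (0:ℝ) ≤ 17/1440 * (b - a)^2 := by positivity
  refine ⟨?_, ?_, ?_, ?_⟩
  · refine IsGreatest.csSup_eq ⟨⟨(3*a+b)/4, ⟨by linarith, le_refl _⟩, ?_⟩, ?_⟩
    · rw [abs_eq hM]; left; ring
    · rintro x ⟨t, ⟨ht1, ht2⟩, rfl⟩
      rw [abs_le]
      constructor <;>
        nlinarith [sq_nonneg (t - (83*a+7*b)/90), sq_nonneg (b-a),
          mul_nonneg (sub_nonneg.2 ht1) (sub_nonneg.2 ht2)]
  · refine IsGreatest.csSup_eq ⟨⟨(3*a+b)/4, ⟨le_refl _, by linarith⟩, ?_⟩, ?_⟩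
    · rw [abs_eq hM]; left; ring
    · rintro x ⟨t, ⟨ht1, ht2⟩, rfl⟩
      rw [abs_le]
      constructor <;>
        nlinarith [sq_nonneg (t - (17*a+13*b)/30), sq_nonneg (b-a),
          mul_nonneg (sub_nonneg.2 ht1) (sub_nonneg.2 ht2)]
  · refine IsGreatest.csSup_eq ⟨⟨(a+3*b)/4, ⟨by linarith, le_refl _⟩, ?_⟩, ?_⟩
    · rw [abs_eq hM]; left; ring
    · rintro x ⟨t, ⟨ht1, ht2⟩, rfl⟩
      rw [abs_le]
      constructor <;>
        nlinarith [sq_nonneg (t - (13*a+17*b)/30), sq_nonneg (b-a),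
          mul_nonneg (sub_nonneg.2 ht1) (sub_nonneg.2 ht2)]
  · refine IsGreatest.csSup_eq ⟨⟨(a+3*b)/4, ⟨le_refl _, by linarith⟩, ?_⟩, ?_⟩
    · rw [abs_eq hM]; left; ring
    · rintro x ⟨t, ⟨ht1, ht2⟩, rfl⟩
      rw [abs_le]
      constructor <;>
        nlinarith [sq_nonneg (t - (7*a+83*b)/90), sq_nonneg (b-a),
          mul_nonneg (sub_nonneg.2 ht1) (sub_nonneg.2 ht2)]
end

section
/- Let a < b. For the piecewise cubic third-order Peano kernel of Boole's rule, the sup of |K₁| over [a,(3a+b)/4] equals (343/1093500)·(b−a)³ and the sup of |K₂| over [(3a+b)/4,(a+b)/2] equals (1/1620)·(b−a)³; since 343/1093500 < 1/1620, the overall sup of |K| over [a,b] is (1/1620)·(b−a)³. -/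
lemma bnd1 (a b t : ℝ) (hab : a < b) (h1 : a ≤ t) (h2 : t ≤ (3*a+b)/4) :
    |t^3/6 - (83*a+7*b)/180*t^2 + (19*a^2/45 + 7*a*b/90)*t - a^2*(23*a+7*b)/180|
      ≤ 343/1093500*(b-a)^3 := by
  rw [abs_le]
  constructor
  · nlinarith [mul_nonneg (sq_nonneg (45*(t-a)-7*(b-a)))
      (by linarith : (0:ℝ) ≤ 90*(t-a)+7*(b-a))]
  · nlinarith [mul_nonneg (by linarith : (0:ℝ) ≤ 3*a+b-4*t) (sq_nonneg ((b-a)+2*(t-a))),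
      mul_nonneg (by linarith : (0:ℝ) ≤ 3*a+b-4*t) (sq_nonneg (t-a)),
      mul_nonneg (mul_nonneg (by linarith : (0:ℝ) ≤ t-a) (by linarith : (0:ℝ) ≤ t-a))
        (by linarith : (0:ℝ) ≤ t-a)]

lemma bnd2 (a b t : ℝ) (hab : a < b) (h1 : (3*a+b)/4 ≤ t) (h2 : t ≤ (a+b)/2) :
    |t^3/6 - (17*a+13*b)/60*t^2 + (7*a^2/45 + 23*a*b/90 + 4*b^2/45)*t
      - (a^3/36 + 13*a^2*b/180 + a*b^2/18 + b^3/90)| ≤ 1/1620*(b-a)^3 := by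
  have hnn : (0:ℝ) ≤ t^3/6 - (17*a+13*b)/60*t^2 + (7*a^2/45 + 23*a*b/90 + 4*b^2/45)*t
      - (a^3/36 + 13*a^2*b/180 + a*b^2/18 + b^3/90) := by
    nlinarith [mul_nonneg (mul_nonneg (by linarith : (0:ℝ) ≤ 4*(t-a)-(b-a))
        (by linarith : (0:ℝ) ≤ (b-a)-2*(t-a))) (by linarith : (0:ℝ) ≤ (b-a)-2*(t-a)),
      mul_nonneg (mul_nonneg (by linarith : (0:ℝ) ≤ (b-a)-2*(t-a))
        (by linarith : (0:ℝ) ≤ b-a)) (by linarith : (0:ℝ) ≤ 6*(t-a)-(b-a))]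
  rw [abs_of_nonneg hnn]
  nlinarith [mul_nonneg (sq_nonneg (3*(t-a)-(b-a))) (by linarith : (0:ℝ) ≤ 19*(b-a)-30*(t-a))]

lemma bnd3 (a b t : ℝ) (hab : a < b) (h1 : (a+b)/2 ≤ t) (h2 : t ≤ (a+3*b)/4) :
    |t^3/6 - (13*a+17*b)/60*t^2 + (a+2*b)*(8*a+7*b)/90*t
      - (a^3/90 + a^2*b/18 + 13*a*b^2/180 + b^3/36)| ≤ 1/1620*(b-a)^3 := by
  have hnp : t^3/6 - (13*a+17*b)/60*t^2 + (a+2*b)*(8*a+7*b)/90*t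
      - (a^3/90 + a^2*b/18 + 13*a*b^2/180 + b^3/36) ≤ 0 := by
    nlinarith [mul_nonneg (mul_nonneg (by linarith : (0:ℝ) ≤ 4*(b-t)-(b-a))
        (by linarith : (0:ℝ) ≤ (b-a)-2*(b-t))) (by linarith : (0:ℝ) ≤ (b-a)-2*(b-t)),
      mul_nonneg (mul_nonneg (by linarith : (0:ℝ) ≤ (b-a)-2*(b-t))
        (by linarith : (0:ℝ) ≤ b-a)) (by linarith : (0:ℝ) ≤ 6*(b-t)-(b-a))]
  rw [abs_of_nonpos hnp]
  nlinarith [mul_nonneg (sq_nonneg (3*(b-t)-(b-a))) (by linarith : (0:ℝ) ≤ 19*(b-a)-30*(b-t))]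

lemma bnd4 (a b t : ℝ) (hab : a < b) (h1 : (a+3*b)/4 ≤ t) (h2 : t ≤ b) :
    |t^3/6 - (7*a+83*b)/180*t^2 + b*(7*a+38*b)/90*t - b^2*(7*a+23*b)/180|
      ≤ 343/1093500*(b-a)^3 := by
  rw [abs_le]
  constructor
  · nlinarith [mul_nonneg (by linarith : (0:ℝ) ≤ 4*t-a-3*b) (sq_nonneg ((b-a)+2*(b-t))),
      mul_nonneg (by linarith : (0:ℝ) ≤ 4*t-a-3*b) (sq_nonneg (b-t)),
      mul_nonneg (mul_nonneg (by linarith : (0:ℝ) ≤ b-t) (by linarith : (0:ℝ) ≤ b-t))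
        (by linarith : (0:ℝ) ≤ b-t)]
  · nlinarith [mul_nonneg (sq_nonneg (45*(b-t)-7*(b-a)))
      (by linarith : (0:ℝ) ≤ 90*(b-t)+7*(b-a))]

theorem boole_kernel3_sup_detail (a b : ℝ) (hab : a < b) (K : ℝ → ℝ)
    (hK1 : ∀ t ∈ Set.Icc a ((3*a+b)/4), K t = t^3/6 - (83*a+7*b)/180*t^2 + (19*a^2/45 + 7*a*b/90)*t - a^2*(23*a+7*b)/180)
    (hK2 : ∀ t ∈ Set.Ioc ((3*a+b)/4) ((a+b)/2), K t = t^3/6 - (17*a+13*b)/60*t^2 + (7*a^2/45 + 23*a*b/90 + 4*b^2/45)*t - (a^3/36 + 13*a^2*b/180 + a*b^2/18 + b^3/90))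
    (hK3 : ∀ t ∈ Set.Ioc ((a+b)/2) ((a+3*b)/4), K t = t^3/6 - (13*a+17*b)/60*t^2 + (a+2*b)*(8*a+7*b)/90*t - (a^3/90 + a^2*b/18 + 13*a*b^2/180 + b^3/36))
    (hK4 : ∀ t ∈ Set.Ioc ((a+3*b)/4) b, K t = t^3/6 - (7*a+83*b)/180*t^2 + b*(7*a+38*b)/90*t - b^2*(7*a+23*b)/180)
    : (sSup ((fun t => |t^3/6 - (83*a+7*b)/180*t^2 + (19*a^2/45 + 7*a*b/90)*t - a^2*(23*a+7*b)/180|) '' Set.Icc a ((3*a+b)/4)) = 343/1093500 * (b - a)^3) ∧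
    (sSup ((fun t => |t^3/6 - (17*a+13*b)/60*t^2 + (7*a^2/45 + 23*a*b/90 + 4*b^2/45)*t - (a^3/36 + 13*a^2*b/180 + a*b^2/18 + b^3/90)|) '' Set.Icc ((3*a+b)/4) ((a+b)/2)) = 1/1620 * (b - a)^3) ∧
    ((343 : ℝ)/1093500 < 1/1620) ∧
    (sSup ((fun t => |K t|) '' Set.Icc a b) = 1/1620 * (b - a)^3) := by
  have hba3 : (0:ℝ) ≤ (b-a)^3 := pow_nonneg (by linarith) 3
  refine ⟨?_, ?_, by norm_num, ?_⟩
  · apply IsGreatest.csSup_eq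
    constructor
    · refine ⟨(38*a+7*b)/45, ⟨by linarith, by linarith⟩, ?_⟩
      have he : ((38*a+7*b)/45)^3/6 - (83*a+7*b)/180*((38*a+7*b)/45)^2
          + (19*a^2/45 + 7*a*b/90)*((38*a+7*b)/45) - a^2*(23*a+7*b)/180
          = -(343/1093500 * (b - a)^3) := by ring
      simp only [he, abs_neg]
      rw [abs_of_nonneg (by nlinarith [hba3])]
    · rintro y ⟨t, ht, rfl⟩
      have := bnd1 a b t hab ht.1 ht.2
      simp only
      linarith
  · apply IsGreatest.csSup_eq
    constructor
    · refine ⟨(2*a+b)/3, ⟨by linarith, by linarith⟩, ?_⟩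
      have he : ((2*a+b)/3)^3/6 - (17*a+13*b)/60*((2*a+b)/3)^2
          + (7*a^2/45 + 23*a*b/90 + 4*b^2/45)*((2*a+b)/3)
          - (a^3/36 + 13*a^2*b/180 + a*b^2/18 + b^3/90) = 1/1620 * (b - a)^3 := by ring
      simp only [he]
      rw [abs_of_nonneg (by nlinarith [hba3])]
    · rintro y ⟨t, ht, rfl⟩
      have := bnd2 a b t hab ht.1 ht.2
      simp only
      linarith
  · apply IsGreatest.csSup_eq
    constructor
    · refine ⟨(2*a+b)/3, ⟨by linarith, by linarith⟩, ?_⟩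
      have hmem : (2*a+b)/3 ∈ Set.Ioc ((3*a+b)/4) ((a+b)/2) :=
        ⟨by linarith, by linarith⟩
      have he : ((2*a+b)/3)^3/6 - (17*a+13*b)/60*((2*a+b)/3)^2
          + (7*a^2/45 + 23*a*b/90 + 4*b^2/45)*((2*a+b)/3)
          - (a^3/36 + 13*a^2*b/180 + a*b^2/18 + b^3/90) = 1/1620 * (b - a)^3 := by ring
      simp only [hK2 _ hmem, he]
      rw [abs_of_nonneg (by nlinarith [hba3])]
    · rintro y ⟨t, ht, rfl⟩
      simp only
      rcases le_or_gt t ((3*a+b)/4) with h1 | h1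
      · rw [hK1 t ⟨ht.1, h1⟩]
        have := bnd1 a b t hab ht.1 h1
        nlinarith
      rcases le_or_gt t ((a+b)/2) with h2 | h2
      · rw [hK2 t ⟨h1, h2⟩]
        exact bnd2 a b t hab (le_of_lt h1) h2
      rcases le_or_gt t ((a+3*b)/4) with h3 | h3
      · rw [hK3 t ⟨h2, h3⟩]
        exact bnd3 a b t hab (le_of_lt h2) h3
      · rw [hK4 t ⟨h3, ht.2⟩]
        have := bnd4 a b t hab (le_of_lt h3) ht.2
        nlinarith
end
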